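/- arXiv:1912.04489 — 7 statements merged into one kernel-verified Lean document; each statement's English description precedes it below -/
import Mathlib

section
/- Let n be odd. Define the 2n × 2n array M_n in block form [[B_n, C_n],[D_n, B_n]], where B_n(i,j) ≡ i-j (mod n) with values in {0,...,n-1}, C_n(i,j) ≡ i+j-2 (mod n) with values in {n,...,2n-1}, and D_n(i,j) ≡ i+j-3 (mod n) with values in {n,...,2n-1}. Then M_n is a 2n × 2n Latin square on {0,1,...,2n-1}. -/
/-!
An entry of `M_n` lies below `n` exactly when it sits in a diagonal block, so two equal
entries of a line lie in blocks of the same kind; there, modulo `n`, the entry is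
`±(index) + const` with sign and constant fixed by the block. Equal entries thus have
indices that are congruent mod `n` and in the same half of `[0, 2n)`, hence equal: each
line maps `[0, 2n)` injectively into itself, and is therefore a bijection.
-/

/-- The `2n × 2n` array `M_n = [[B_n, C_n],[D_n, B_n]]` (0-based global row `r` and
column `c`): `B_n(i,j) ≡ i - j (mod n)` with values in `{0,…,n-1}`,
`C_n(i,j) ≡ i + j - 2 (mod n)` with values in `{n,…,2n-1}`, and
`D_n(i,j) ≡ i + j - 3 (mod n)` with values in `{n,…,2n-1}`, where within each
block the indices `i,j` are 1-based. -/
def Mn (n r c : ℕ) : ℕ :=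
  if r < n then
    (if c < n then (r + n - c) % n else n + (r + c) % n)
  else
    (if c < n then n + (r + c + n - 1) % n else (r + n - c) % n)

theorem Nat.existsUnique_of_mapsTo_of_injOn {f : ℕ → ℕ} {m : ℕ}
    (hmaps : Set.MapsTo f (Set.Iio m) (Set.Iio m)) (hinj : Set.InjOn f (Set.Iio m)) :
    ∀ v < m, ∃! x, x < m ∧ f x = v := by
  intro v hv
  obtain ⟨x, hx, rfl⟩ :=
    ((Set.finite_Iio m).injOn_iff_bijOn_of_mapsTo hmaps |>.mp hinj).surjOn hv
  exact ⟨x, ⟨hx, rfl⟩, fun y ⟨hy, hxy⟩ => hinj hy hx hxy⟩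

theorem Nat.eq_of_modEq_of_lt_iff_lt {n a b : ℕ} (h : a ≡ b [MOD n]) (ha : a < 2 * n)
    (hb : b < 2 * n) (hab : a < n ↔ b < n) : a = b :=
  h.eq_of_abs_lt (by rw [abs_sub_lt_iff]; omega)

namespace Mn

variable {n r c : ℕ}

theorem lt_two_mul (hn : 0 < n) : Mn n r c < 2 * n := by
  have := Nat.mod_lt (r + n - c) hn
  have := Nat.mod_lt (r + c) hn
  have := Nat.mod_lt (r + c + n - 1) hn
  unfold Mn
  split_ifs <;> omega

theorem lt_iff (hn : 0 < n) : Mn n r c < n ↔ (r < n ↔ c < n) := by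
  have := Nat.mod_lt (r + n - c) hn
  unfold Mn
  split_ifs <;> simp only [*, iff_true, iff_false, not_true_eq_false] <;> omega

theorem cast_zmod (hc : c < 2 * n) :
    (Mn n r c : ZMod n) =
      if r < n then (if c < n then (r : ZMod n) - c else r + c)
      else (if c < n then (r : ZMod n) + c - 1 else r - c) := by
  unfold Mn
  split_ifs <;> simp only [Nat.cast_add, ZMod.natCast_mod, ZMod.natCast_self, zero_add]
  all_goals first
    | rw [Nat.cast_sub (by omega : c ≤ r + n)]
    | rw [Nat.cast_sub (by omega : 1 ≤ r + c + n)]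
  all_goals push_cast [ZMod.natCast_self]; ring

theorem injOn_row : Set.InjOn (Mn n r) (Set.Iio (2 * n)) := by
  intro c (hc : c < 2 * n) c' (hc' : c' < 2 * n) h
  have hn : 0 < n := by omega
  have hhalf : c < n ↔ c' < n := by
    have := lt_iff hn (r := r) (c := c)
    have := lt_iff hn (r := r) (c := c')
    rw [h] at *
    tauto
  have hcast := congrArg (Nat.cast : ℕ → ZMod n) h
  simp only [cast_zmod hc, cast_zmod hc', ← hhalf] at hcast
  have hmod : (c : ZMod n) = c' := by
    split_ifs at hcast <;> first | linear_combination hcast | linear_combination -hcast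
  exact Nat.eq_of_modEq_of_lt_iff_lt ((ZMod.natCast_eq_natCast_iff _ _ _).mp hmod) hc hc' hhalf

theorem injOn_col (hc : c < 2 * n) : Set.InjOn (Mn n · c) (Set.Iio (2 * n)) := by
  intro r (hr : r < 2 * n) r' (hr' : r' < 2 * n) h
  have hn : 0 < n := by omega
  have hhalf : r < n ↔ r' < n := by
    have := lt_iff hn (r := r) (c := c)
    have := lt_iff hn (r := r') (c := c)
    simp only at h
    rw [h] at *
    tauto
  have hcast := congrArg (Nat.cast : ℕ → ZMod n) h
  simp only [cast_zmod hc, ← hhalf] at hcast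
  have hmod : (r : ZMod n) = r' := by
    split_ifs at hcast <;> linear_combination hcast
  exact Nat.eq_of_modEq_of_lt_iff_lt ((ZMod.natCast_eq_natCast_iff _ _ _).mp hmod) hr hr' hhalf

end Mn

theorem Mn_latin_general (n : ℕ) :
    (∀ r < 2 * n, ∀ v < 2 * n, ∃! c, c < 2 * n ∧ Mn n r c = v) ∧
    (∀ c < 2 * n, ∀ v < 2 * n, ∃! r, r < 2 * n ∧ Mn n r c = v) := by
  constructor
  · intro r hr
    exact Nat.existsUnique_of_mapsTo_of_injOn
      (fun _ _ => Mn.lt_two_mul (by omega)) Mn.injOn_row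
  · intro c hc
    exact Nat.existsUnique_of_mapsTo_of_injOn (f := (Mn n · c))
      (fun _ _ => Mn.lt_two_mul (by omega)) (Mn.injOn_col hc)

/-- For odd `n`, `M_n` is a `2n × 2n` Latin square on `{0,1,…,2n-1}`: each row and
each column contains every value of `{0,…,2n-1}` exactly once. -/
theorem Mn_latin (n : ℕ) (hn : Odd n) :
    (∀ r < 2 * n, ∀ v < 2 * n, ∃! c, c < 2 * n ∧ Mn n r c = v) ∧
    (∀ c < 2 * n, ∀ v < 2 * n, ∃! r, r < 2 * n ∧ Mn n r c = v) :=
  Mn_latin_general n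
end

section
/- Let n ≥ 3 be odd and not divisible by 3. Then the Latin square M_n = [[B_n, C_n],[D_n, B_n]] (with blocks defined by B_n(i,j) ≡ i-j (mod n) in {0,...,n-1}, C_n(i,j) ≡ i+j-2 (mod n) in {n,...,2n-1}, D_n(i,j) ≡ i+j-3 (mod n) in {n,...,2n-1}) contains no 2×2 Latin subsquare; that is, there do not exist two rows r1 ≠ r2 and two columns c1 ≠ c2 such that M_n(r1,c1) = M_n(r2,c2) and M_n(r1,c2) = M_n(r2,c1). -/
/-!
Reduce modulo `n`: the entry in row `r`, column `c` is `≡ r - c` on the two `B` blocks,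
`≡ r + c` on `C` and `≡ r + c - 1` on `D`, and it is `< n` exactly on the `B` blocks.
If both diagonals of a `2 × 2` subsquare lie in blocks of the same kind, the two equations
give `2 c₁ = 2 c₂` in `ZMod n`, hence `c₁ = c₂` since `n` is odd; otherwise subtracting
them leaves `0 = 1` in `ZMod n`.
-/

section

variable {n r c r' c' : ℕ}

lemma Mn_lt_iff (hn : 0 < n) : Mn n r c < n ↔ (r < n ↔ c < n) := by
  unfold Mn
  have := Nat.mod_lt (r + n - c) hn
  split_ifs <;> omega

lemma lt_iff_lt_iff_of_Mn_eq (hn : 0 < n) (h : Mn n r c = Mn n r' c') :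
    (r < n ↔ c < n) ↔ (r' < n ↔ c' < n) := by
  rw [← Mn_lt_iff hn, ← Mn_lt_iff hn, h]

lemma natCast_Mn_of_iff (h : r < n ↔ c < n) (hc : c < 2 * n) :
    (Mn n r c : ZMod n) = r - c := by
  have hle : c ≤ r + n := by omega
  unfold Mn
  split_ifs <;> first | omega | simp [Nat.cast_sub hle]

lemma natCast_Mn_of_not_iff (h : ¬(r < n ↔ c < n)) :
    (Mn n r c : ZMod n) = r + c - if r < n then 0 else 1 := by
  have hle : 1 ≤ r + c + n := by omega
  unfold Mn
  split_ifs <;> first | omega | simp [Nat.cast_sub hle]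

lemma lt_iff_lt_of_ite_eq (hn : 1 < n)
    (h : ((if r < n then 0 else 1 : ZMod n)) = if r' < n then 0 else 1) :
    r < n ↔ r' < n := by
  have : Fact (1 < n) := ⟨hn⟩
  split_ifs at h <;> first | omega | simp at h

lemma eq_of_natCast_eq_of_lt_iff (hc : c < 2 * n) (hc' : c' < 2 * n) (hcc' : c < n ↔ c' < n)
    (h : (c : ZMod n) = c') : c = c' := by
  rw [ZMod.natCast_eq_natCast_iff'] at h
  by_cases hlt : c < n
  · rwa [Nat.mod_eq_of_lt hlt, Nat.mod_eq_of_lt (hcc'.1 hlt)] at h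
  · rw [Nat.mod_eq_sub_mod (a := c) (by omega), Nat.mod_eq_sub_mod (a := c') (by omega),
      Nat.mod_eq_of_lt (by omega), Nat.mod_eq_of_lt (by omega)] at h
    omega

lemma eq_of_natCast_sub_eq_sub (hodd : Odd n) (hc : c < 2 * n) (hc' : c' < 2 * n)
    (hcc' : c < n ↔ c' < n) (h : (c - c' : ZMod n) = c' - c) : c = c' := by
  refine eq_of_natCast_eq_of_lt_iff hc hc' hcc' (sub_eq_zero.1 ?_)
  rw [← ZMod.add_self_eq_zero_iff_eq_zero hodd]
  linear_combination h

end

theorem Mn_no_subsquare_general (n : ℕ) (hn3 : 3 ≤ n) (hodd : Odd n) :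
    ¬ ∃ r1 r2 c1 c2 : ℕ, r1 < 2 * n ∧ r2 < 2 * n ∧ c1 < 2 * n ∧ c2 < 2 * n ∧
      r1 ≠ r2 ∧ c1 ≠ c2 ∧ Mn n r1 c1 = Mn n r2 c2 ∧ Mn n r1 c2 = Mn n r2 c1 := by
  rintro ⟨r1, r2, c1, c2, -, -, hc1, hc2, -, hc, h11, h12⟩
  have hb11 := lt_iff_lt_iff_of_Mn_eq (by omega) h11
  have hb12 := lt_iff_lt_iff_of_Mn_eq (by omega) h12
  have e11 := congrArg (Nat.cast : ℕ → ZMod n) h11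
  have e12 := congrArg (Nat.cast : ℕ → ZMod n) h12
  by_cases hB1 : r1 < n ↔ c1 < n <;> by_cases hB2 : r1 < n ↔ c2 < n
  · rw [natCast_Mn_of_iff hB1 hc1, natCast_Mn_of_iff (hb11.1 hB1) hc2] at e11
    rw [natCast_Mn_of_iff hB2 hc2, natCast_Mn_of_iff (hb12.1 hB2) hc1] at e12
    exact hc (eq_of_natCast_sub_eq_sub hodd hc1 hc2 (hB1.symm.trans hB2)
      (by linear_combination e12 - e11))
  · rw [natCast_Mn_of_iff hB1 hc1, natCast_Mn_of_iff (hb11.1 hB1) hc2] at e11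
    rw [natCast_Mn_of_not_iff hB2, natCast_Mn_of_not_iff (mt hb12.2 hB2)] at e12
    have hr : r1 < n ↔ r2 < n := lt_iff_lt_of_ite_eq (by omega) (by linear_combination e11 - e12)
    exact hB2 (hr.trans (hb11.1 hB1))
  · rw [natCast_Mn_of_not_iff hB1, natCast_Mn_of_not_iff (mt hb11.2 hB1)] at e11
    rw [natCast_Mn_of_iff hB2 hc2, natCast_Mn_of_iff (hb12.1 hB2) hc1] at e12
    have hr : r1 < n ↔ r2 < n := lt_iff_lt_of_ite_eq (by omega) (by linear_combination e12 - e11)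
    exact hB1 (hr.trans (hb12.1 hB2))
  · rw [natCast_Mn_of_not_iff hB1, natCast_Mn_of_not_iff (mt hb11.2 hB1)] at e11
    rw [natCast_Mn_of_not_iff hB2, natCast_Mn_of_not_iff (mt hb12.2 hB2)] at e12
    exact hc (eq_of_natCast_sub_eq_sub hodd hc1 hc2 ((not_iff.1 hB1).symm.trans (not_iff.1 hB2))
      (by linear_combination e11 - e12))

/-- For `n ≥ 3` odd and not divisible by 3, the Latin square `M_n` contains no
`2 × 2` Latin subsquare. -/
theorem Mn_no_subsquare (n : ℕ) (hn3 : 3 ≤ n) (hodd : Odd n) (h3 : ¬ (3 ∣ n)) :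
    ¬ ∃ r1 r2 c1 c2 : ℕ, r1 < 2 * n ∧ r2 < 2 * n ∧ c1 < 2 * n ∧ c2 < 2 * n ∧
      r1 ≠ r2 ∧ c1 ≠ c2 ∧ Mn n r1 c1 = Mn n r2 c2 ∧ Mn n r1 c2 = Mn n r2 c1 :=
  Mn_no_subsquare_general n hn3 hodd
end

section
/- Let n be odd. Define, for 1 ≤ i ≤ (n-1)/2, A_i = { {x,y} : x,y ∈ {0,...,n-1}, y - x ≡ ±i (mod n) } and B_i = { {x,y} : x,y ∈ {n,...,2n-1}, y - x ≡ ±i (mod n) }, and for 0 ≤ i ≤ n-1, C_i = { {x,y} : 0 ≤ x ≤ n-1, n ≤ y ≤ 2n-1, x+y ≡ i (mod n) }. Then the union of all A_i, B_i (1 ≤ i ≤ (n-1)/2) and all C_i (0 ≤ i ≤ n-1) equals the set of all 2-element subsets of {0,1,...,2n-1}, and these sets are pairwise disjoint. -/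
/-- `A_i = { {x,y} ⊆ {0,…,n-1} : y - x ≡ ±i (mod n) }`. -/
def AA (n i : ℕ) : Set (Finset ℕ) :=
  { p | ∃ x y : ℕ, x < n ∧ y < n ∧ x ≠ y ∧
      ((y + n - x) % n = i ∨ (x + n - y) % n = i) ∧ p = {x, y} }

/-- `B_i = { {x,y} ⊆ {n,…,2n-1} : y - x ≡ ±i (mod n) }`. -/
def BB (n i : ℕ) : Set (Finset ℕ) :=
  { p | ∃ x y : ℕ, n ≤ x ∧ x < 2 * n ∧ n ≤ y ∧ y < 2 * n ∧ x ≠ y ∧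
      ((y + n - x) % n = i ∨ (x + n - y) % n = i) ∧ p = {x, y} }

/-- `C_i = { {x,y} : 0 ≤ x ≤ n-1, n ≤ y ≤ 2n-1, x + y ≡ i (mod n) }`. -/
def CC (n i : ℕ) : Set (Finset ℕ) :=
  { p | ∃ x y : ℕ, x < n ∧ n ≤ y ∧ y < 2 * n ∧ (x + y) % n = i ∧ p = {x, y} }

/-!
Every pair `x < y < 2n` lies in exactly one of the three blocks `{0,…,n-1}²`, `{n,…,2n-1}²` or
across them. Across them, `(x + y) % n` picks the unique `C_i`. Inside a block, `0 < y - x < n`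
and the residues `±(y - x) mod n` are `d = y - x` and `n - d`; they sum to `n`, so for odd `n`
exactly one of them is at most `(n - 1) / 2`, which picks the unique `A_i` or `B_i`.
-/

theorem Finset.eq_and_eq_of_pair_eq_pair {α : Type*} [LinearOrder α] {a b c d : α}
    (hab : a < b) (hcd : c < d) (h : ({a, b} : Finset α) = {c, d}) : a = c ∧ b = d := by
  have hset : ({a, b} : Set α) = {c, d} := by rw [← Finset.coe_pair, ← Finset.coe_pair, h]
  rcases Set.pair_eq_pair_iff.mp hset with h' | ⟨rfl, rfl⟩
  · exact h'
  · exact absurd hab hcd.not_gt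

theorem Finset.card_eq_two_and_forall_lt_iff {α : Type*} [LinearOrder α] {p : Finset α} {m : α} :
    (p.card = 2 ∧ ∀ z ∈ p, z < m) ↔ ∃ x y, x < y ∧ y < m ∧ p = {x, y} := by
  constructor
  · rintro ⟨hcard, hlt⟩
    obtain ⟨x, y, hxy, rfl⟩ := Finset.card_eq_two.mp hcard
    rcases hxy.lt_or_gt with h | h
    · exact ⟨x, y, h, hlt y (by simp), rfl⟩
    · exact ⟨y, x, h, hlt x (by simp), Finset.pair_comm x y⟩
  · rintro ⟨x, y, hxy, hy, rfl⟩
    refine ⟨Finset.card_pair hxy.ne, fun z hz => ?_⟩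
    rcases Finset.mem_insert.mp hz with rfl | hz
    exacts [hxy.trans hy, Finset.mem_singleton.mp hz ▸ hy]

section Residues

variable {n x y i j : ℕ}

theorem add_sub_mod_eq_or_iff (hxy : x < y) (hyx : y < x + n) :
    ((y + n - x) % n = i ∨ (x + n - y) % n = i) ↔ (i = y - x ∨ i = n - (y - x)) := by
  rw [show y + n - x = y - x + n by omega, Nat.add_mod_right, Nat.mod_eq_of_lt (by omega),
    show x + n - y = n - (y - x) by omega, Nat.mod_eq_of_lt (by omega)]
  omega

theorem eq_of_add_sub_mod_eq_or (hxy : x < y) (hyx : y < x + n) (hi : 2 * i < n)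
    (hj : 2 * j < n) (hci : (y + n - x) % n = i ∨ (x + n - y) % n = i)
    (hcj : (y + n - x) % n = j ∨ (x + n - y) % n = j) : i = j := by
  rw [add_sub_mod_eq_or_iff hxy hyx] at hci hcj
  omega

theorem exists_add_sub_mod_eq_or (hn : Odd n) (hxy : x < y) (hyx : y < x + n) :
    ∃ i ∈ Set.Icc 1 ((n - 1) / 2), (y + n - x) % n = i ∨ (x + n - y) % n = i := by
  obtain ⟨k, rfl⟩ := hn
  simp only [add_sub_mod_eq_or_iff hxy hyx, Set.mem_Icc]
  rcases le_or_gt (y - x) k with hd | hd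
  · exact ⟨y - x, by omega, .inl rfl⟩
  · exact ⟨2 * k + 1 - (y - x), by omega, .inr rfl⟩

end Residues

section Classes

variable {n i j : ℕ} {p : Finset ℕ}

theorem mem_AA_iff : p ∈ AA n i ↔ ∃ x y : ℕ, x < y ∧ y < n ∧
    ((y + n - x) % n = i ∨ (x + n - y) % n = i) ∧ p = {x, y} := by
  constructor
  · rintro ⟨x, y, hx, hy, hxy, hc, rfl⟩
    rcases hxy.lt_or_gt with h | h
    · exact ⟨x, y, h, hy, hc, rfl⟩
    · exact ⟨y, x, h, hx, hc.symm, Finset.pair_comm x y⟩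
  · rintro ⟨x, y, hxy, hy, hc, rfl⟩
    exact ⟨x, y, hxy.trans hy, hy, hxy.ne, hc, rfl⟩

theorem mem_BB_iff : p ∈ BB n i ↔ ∃ x y : ℕ, n ≤ x ∧ x < y ∧ y < 2 * n ∧
    ((y + n - x) % n = i ∨ (x + n - y) % n = i) ∧ p = {x, y} := by
  constructor
  · rintro ⟨x, y, hx, hx', hy, hy', hxy, hc, rfl⟩
    rcases hxy.lt_or_gt with h | h
    · exact ⟨x, y, hx, h, hy', hc, rfl⟩
    · exact ⟨y, x, hy, h, hx', hc.symm, Finset.pair_comm x y⟩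
  · rintro ⟨x, y, hx, hxy, hy, hc, rfl⟩
    exact ⟨x, y, hx, hxy.trans hy, hx.trans hxy.le, hy, hxy.ne, hc, rfl⟩

theorem disjoint_AA_AA (hi : 2 * i < n) (hj : 2 * j < n) (hij : i ≠ j) :
    Disjoint (AA n i) (AA n j) := by
  refine Set.disjoint_left.mpr fun p hpi hpj => hij ?_
  obtain ⟨x, y, hxy, hy, hci, rfl⟩ := mem_AA_iff.mp hpi
  obtain ⟨x', y', hxy', hy', hcj, hp⟩ := mem_AA_iff.mp hpj
  obtain ⟨rfl, rfl⟩ := Finset.eq_and_eq_of_pair_eq_pair hxy hxy' hp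
  exact eq_of_add_sub_mod_eq_or hxy (by omega) hi hj hci hcj

theorem disjoint_BB_BB (hi : 2 * i < n) (hj : 2 * j < n) (hij : i ≠ j) :
    Disjoint (BB n i) (BB n j) := by
  refine Set.disjoint_left.mpr fun p hpi hpj => hij ?_
  obtain ⟨x, y, hx, hxy, hy, hci, rfl⟩ := mem_BB_iff.mp hpi
  obtain ⟨x', y', hx', hxy', hy', hcj, hp⟩ := mem_BB_iff.mp hpj
  obtain ⟨rfl, rfl⟩ := Finset.eq_and_eq_of_pair_eq_pair hxy hxy' hp
  exact eq_of_add_sub_mod_eq_or hxy (by omega) hi hj hci hcj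

theorem disjoint_CC_CC (hij : i ≠ j) : Disjoint (CC n i) (CC n j) := by
  refine Set.disjoint_left.mpr fun p ⟨x, y, hx, hy, _, hci, hpi⟩ ⟨x', y', hx', hy', _, hcj, hpj⟩ => ?_
  obtain ⟨rfl, rfl⟩ :=
    Finset.eq_and_eq_of_pair_eq_pair (hx.trans_le hy) (hx'.trans_le hy') (hpi.symm.trans hpj)
  exact hij (hci.symm.trans hcj)

theorem disjoint_AA_BB : Disjoint (AA n i) (BB n j) := by
  refine Set.disjoint_left.mpr fun p hpi hpj => ?_
  obtain ⟨x, y, hxy, hy, -, rfl⟩ := mem_AA_iff.mp hpi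
  obtain ⟨x', y', hx', hxy', -, -, hp⟩ := mem_BB_iff.mp hpj
  obtain ⟨rfl, rfl⟩ := Finset.eq_and_eq_of_pair_eq_pair hxy hxy' hp
  omega

theorem disjoint_AA_CC : Disjoint (AA n i) (CC n j) := by
  refine Set.disjoint_left.mpr fun p hpi ⟨x', y', hx', hy', _, _, hp⟩ => ?_
  obtain ⟨x, y, hxy, hy, -, rfl⟩ := mem_AA_iff.mp hpi
  obtain ⟨rfl, rfl⟩ := Finset.eq_and_eq_of_pair_eq_pair hxy (hx'.trans_le hy') hp
  omega

theorem disjoint_BB_CC : Disjoint (BB n i) (CC n j) := by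
  refine Set.disjoint_left.mpr fun p hpi ⟨x', y', hx', hy', _, _, hp⟩ => ?_
  obtain ⟨x, y, hx, hxy, -, -, rfl⟩ := mem_BB_iff.mp hpi
  obtain ⟨rfl, rfl⟩ := Finset.eq_and_eq_of_pair_eq_pair hxy (hx'.trans_le hy') hp
  omega

theorem iUnion_AA_union_iUnion_BB_union_iUnion_CC (hn : Odd n) :
    ((⋃ i ∈ Set.Icc 1 ((n - 1) / 2), AA n i) ∪ (⋃ i ∈ Set.Icc 1 ((n - 1) / 2), BB n i) ∪
        (⋃ i ∈ Set.Iio n, CC n i)) =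
      { p : Finset ℕ | p.card = 2 ∧ ∀ x ∈ p, x < 2 * n } := by
  ext p
  simp only [Set.mem_union, Set.mem_iUnion, exists_prop, Set.mem_ofPred_eq, mem_AA_iff, mem_BB_iff,
    Finset.card_eq_two_and_forall_lt_iff]
  constructor
  · rintro ((⟨_, -, x, y, hxy, hy, -, rfl⟩ | ⟨_, -, x, y, -, hxy, hy, -, rfl⟩) |
      ⟨_, -, x, y, hx, hy, hy', -, rfl⟩)
    exacts [⟨x, y, hxy, by omega, rfl⟩, ⟨x, y, hxy, hy, rfl⟩, ⟨x, y, hx.trans_le hy, hy', rfl⟩]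
  · rintro ⟨x, y, hxy, hy, rfl⟩
    rcases lt_or_ge y n with hyn | hny
    · obtain ⟨i, hi, hc⟩ := exists_add_sub_mod_eq_or hn hxy (by omega)
      exact .inl (.inl ⟨i, hi, x, y, hxy, hyn, hc, rfl⟩)
    rcases lt_or_ge x n with hxn | hnx
    · exact .inr ⟨(x + y) % n, Nat.mod_lt _ (by omega), x, y, hxn, hny, hy, rfl, rfl⟩
    · obtain ⟨i, hi, hc⟩ := exists_add_sub_mod_eq_or hn hxy (by omega)
      exact .inl (.inr ⟨i, hi, x, y, hnx, hxy, hy, hc, rfl⟩)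

end Classes

/-- For odd `n`, the sets `A_i, B_i` (`1 ≤ i ≤ (n-1)/2`) and `C_i` (`0 ≤ i ≤ n-1`)
are pairwise disjoint and their union is the set of all 2-element subsets of
`{0,…,2n-1}`. -/
theorem partition_pairs (n : ℕ) (hn : Odd n) :
    ((⋃ i ∈ Set.Icc 1 ((n - 1) / 2), AA n i) ∪ (⋃ i ∈ Set.Icc 1 ((n - 1) / 2), BB n i) ∪
        (⋃ i ∈ Set.Iio n, CC n i)) =
      { p : Finset ℕ | p.card = 2 ∧ ∀ x ∈ p, x < 2 * n } ∧
    (∀ i ∈ Set.Icc 1 ((n - 1) / 2), ∀ j ∈ Set.Icc 1 ((n - 1) / 2), i ≠ j →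
      Disjoint (AA n i) (AA n j)) ∧
    (∀ i ∈ Set.Icc 1 ((n - 1) / 2), ∀ j ∈ Set.Icc 1 ((n - 1) / 2), i ≠ j →
      Disjoint (BB n i) (BB n j)) ∧
    (∀ i ∈ Set.Iio n, ∀ j ∈ Set.Iio n, i ≠ j → Disjoint (CC n i) (CC n j)) ∧
    (∀ i ∈ Set.Icc 1 ((n - 1) / 2), ∀ j ∈ Set.Icc 1 ((n - 1) / 2),
      Disjoint (AA n i) (BB n j)) ∧
    (∀ i ∈ Set.Icc 1 ((n - 1) / 2), ∀ j ∈ Set.Iio n, Disjoint (AA n i) (CC n j)) ∧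
    (∀ i ∈ Set.Icc 1 ((n - 1) / 2), ∀ j ∈ Set.Iio n, Disjoint (BB n i) (CC n j)) := by
  have two_mul_lt : ∀ i ∈ Set.Icc 1 ((n - 1) / 2), 2 * i < n := fun i hi => by
    rw [Set.mem_Icc] at hi; omega
  refine ⟨iUnion_AA_union_iUnion_BB_union_iUnion_CC hn, fun i hi j hj => disjoint_AA_AA (two_mul_lt i hi) (two_mul_lt j hj),
    fun i hi j hj => disjoint_BB_BB (two_mul_lt i hi) (two_mul_lt j hj),
    fun _ _ _ _ => disjoint_CC_CC, fun _ _ _ _ => disjoint_AA_BB,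
    fun _ _ _ _ => disjoint_AA_CC, fun _ _ _ _ => disjoint_BB_CC⟩
end

section
/- Let n ≥ 7 with n ≡ 1 or 5 (mod 6) be prime. For each 1 ≤ i ≤ (n-1)/2, the edge set A_i ∪ B_i ∪ C_{i-1} (a set of 3n edges of the complete graph on {0,...,2n-1}) can be partitioned into three perfect matchings of K_{2n}, where A_i = { {x,y} ⊂ {0,...,n-1} : y-x ≡ ±i (mod n) }, B_i = { {x,y} ⊂ {n,...,2n-1} : y-x ≡ ±i (mod n) }, and C_{i-1} = { {x,y} : 0 ≤ x ≤ n-1, n ≤ y ≤ 2n-1, x+y ≡ i-1 (mod n) }. -/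
/-- A perfect matching (one-factor) of the complete graph on `{0,…,2n-1}`. -/
def IsOneFactor (n : ℕ) (F : Set (Finset ℕ)) : Prop :=
  (∀ p ∈ F, p.card = 2 ∧ ∀ x ∈ p, x < 2 * n) ∧
  (F.Pairwise fun p q => Disjoint p q) ∧
  (∀ v < 2 * n, ∃ p ∈ F, v ∈ p)

/-!
Index the left vertices as `k * i` and the right vertices as `n + (i - 1 - k * i)`, with
`k : ZMod n`; since `i` is a unit mod `n`, this is a bijection from `Bool × ZMod n` onto
`{0, …, 2n - 1}`. In these coordinates `A_i` and `B_i` become the two `n`-cycles `k ~ k + 1`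
and `C_{i-1}` becomes the rungs `(false, k) ~ (true, k)`: the edge set is the prism
`C_n □ K_2`. For odd `n` the prism has an explicit proper 3-edge-colouring, and its colour
classes are the three perfect matchings.
-/

open Function Set

theorem isOneFactor_image {ι : Type*} {n : ℕ} (edge : ι → Finset ℕ) (S : Set ι)
    (hcard : ∀ t ∈ S, (edge t).card = 2) (hlt : ∀ t ∈ S, ∀ x ∈ edge t, x < 2 * n)
    (hunique : ∀ v < 2 * n, ∃! t, t ∈ S ∧ v ∈ edge t) : IsOneFactor n (edge '' S) := by
  refine ⟨?_, ?_, fun v hv => ?_⟩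
  · rintro _ ⟨t, ht, rfl⟩
    exact ⟨hcard t ht, hlt t ht⟩
  · rintro _ ⟨t, ht, rfl⟩ _ ⟨t', ht', rfl⟩ hne
    refine Finset.disjoint_left.2 fun v hv hv' => hne ?_
    exact congrArg edge ((hunique v (hlt t ht v hv)).unique ⟨ht, hv⟩ ⟨ht', hv'⟩)
  · obtain ⟨t, ⟨ht, hvt⟩, -⟩ := hunique v hv
    exact ⟨edge t, mem_image_of_mem edge ht, hvt⟩

theorem existsUnique_of_three_distinct {α : Type*} (col : α → Fin 3) {x y z : α}
    (hxy : col x ≠ col y) (hxz : col x ≠ col z) (hyz : col y ≠ col z) (c : Fin 3) :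
    ∃! t, col t = c ∧ (t = x ∨ t = y ∨ t = z) := by
  have hc : c = col x ∨ c = col y ∨ c = col z := by omega
  rcases hc with rfl | rfl | rfl <;> refine ⟨_, ⟨rfl, by simp⟩, ?_⟩ <;>
    rintro t ⟨ht, rfl | rfl | rfl⟩ <;> simp_all

inductive PrismEdge (n : ℕ)
  | cycle (s : Bool) (k : ZMod n)
  | rung (k : ZMod n)

namespace PrismEdge

variable {n : ℕ}

def toFinset (lab : Bool × ZMod n → ℕ) : PrismEdge n → Finset ℕ
  | cycle s k => {lab (s, k), lab (s, k + 1)}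
  | rung k => {lab (false, k), lab (true, k)}

/-- Away from `0` the cycle colours alternate with the parity of `k.val`; as `n` is odd, the
cycle edges at `n - 1 → 0` and `0 → 1` get colours `1` and `2`, and the rungs at `0` and `1`
take the colour left free there. -/
def colour : PrismEdge n → Fin 3
  | cycle _ k => if k = 0 then 2 else if k.val % 2 = 0 then 1 else 0
  | rung k => if k = 0 then 0 else if k = 1 then 1 else 2

def colourClass (lab : Bool × ZMod n → ℕ) (c : Fin 3) : Set (Finset ℕ) :=
  toFinset lab '' {t | t.colour = c}

variable {lab : Bool × ZMod n → ℕ}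

theorem mem_toFinset_iff (hlab : Injective lab) (s : Bool) (k : ZMod n) (t : PrismEdge n) :
    lab (s, k) ∈ t.toFinset lab ↔ t = cycle s k ∨ t = cycle s (k - 1) ∨ t = rung k := by
  cases t with
  | cycle s' k' =>
    simp only [toFinset, Finset.mem_insert, Finset.mem_singleton, hlab.eq_iff, Prod.mk.injEq,
      cycle.injEq, reduceCtorEq, or_false, eq_sub_iff_add_eq]
    grind
  | rung k' =>
    cases s <;> simp [toFinset, hlab.eq_iff, eq_comm]

theorem toFinset_injective (hlab : Injective lab) (h2 : (2 : ZMod n) ≠ 0) :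
    Injective (toFinset lab) := by
  intro t t' h
  have hmem : ∀ p, lab p ∈ toFinset lab t → lab p ∈ toFinset lab t' := fun p hp => h ▸ hp
  cases t with
  | cycle s k =>
    have h₁ := hmem (s, k) (by simp [toFinset])
    have h₂ := hmem (s, k + 1) (by simp [toFinset])
    rw [mem_toFinset_iff hlab] at h₁ h₂
    rw [add_sub_cancel_right] at h₂
    have hk₁ : k + 1 ≠ k := fun e => h2 (by linear_combination 2 * e)
    have hk₂ : k + 1 ≠ k - 1 := fun e => h2 (by linear_combination e)
    grind
  | rung k =>
    have h₁ := hmem (false, k) (by simp [toFinset])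
    have h₂ := hmem (true, k) (by simp [toFinset])
    rw [mem_toFinset_iff hlab] at h₁ h₂
    grind

theorem card_toFinset (hlab : Injective lab) (h1 : (1 : ZMod n) ≠ 0) (t : PrismEdge n) :
    (t.toFinset lab).card = 2 := by
  cases t <;> refine Finset.card_pair (hlab.ne ?_) <;> simp [h1]

theorem colour_ne (hodd : Odd n) (hn : 1 < n) (s : Bool) (k : ZMod n) :
    (cycle s k).colour ≠ (cycle s (k - 1)).colour ∧ (cycle s k).colour ≠ (rung k).colour ∧
      (cycle s (k - 1)).colour ≠ (rung k).colour := by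
  have : Fact (1 < n) := ⟨hn⟩
  by_cases hk₀ : k = 0
  · have hval : (-1 : ZMod n).val % 2 = 0 := by
      rw [ZMod.val_neg_of_ne_zero, ZMod.val_one]
      obtain ⟨m, rfl⟩ := hodd
      omega
    simp [colour, hk₀, hval]
  by_cases hk₁ : k = 1
  · simp [colour, hk₁, ZMod.val_one]
  have hpos : 0 < k.val := ZMod.val_pos.2 hk₀
  have hval : (k - 1).val = k.val - 1 := by
    rw [ZMod.val_sub, ZMod.val_one]
    rwa [ZMod.val_one]
  simp only [colour, hk₀, hk₁, sub_eq_zero, hval, if_false]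
  split_ifs <;> simp <;> omega

theorem isOneFactor_colourClass (hodd : Odd n) (hn : 1 < n) (hlab : Injective lab)
    (hrange : range lab = Iio (2 * n)) (c : Fin 3) : IsOneFactor n (colourClass lab c) := by
  have : Fact (1 < n) := ⟨hn⟩
  refine isOneFactor_image _ _ (fun t _ => card_toFinset hlab one_ne_zero t) ?_ ?_
  · intro t _ x hx
    suffices x ∈ range lab by rwa [hrange] at this
    cases t <;> simp only [toFinset, Finset.mem_insert, Finset.mem_singleton] at hx <;>
      rcases hx with rfl | rfl <;> exact mem_range_self _
  · intro v hv
    obtain ⟨⟨s, k⟩, rfl⟩ : v ∈ range lab := hrange ▸ hv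
    simp only [mem_ofPred_eq, mem_toFinset_iff hlab]
    obtain ⟨h₁, h₂, h₃⟩ := colour_ne hodd hn s k
    exact existsUnique_of_three_distinct colour h₁ h₂ h₃ c

theorem disjoint_colourClass (hodd : Odd n) (hn : 1 < n) (hlab : Injective lab) {c d : Fin 3}
    (hcd : c ≠ d) : Disjoint (colourClass lab c) (colourClass lab d) := by
  have h2 : (2 : ZMod n) ≠ 0 := by
    rw [← Nat.cast_ofNat, Ne, ZMod.natCast_eq_zero_iff]
    intro h
    have := Nat.le_of_dvd two_pos h
    obtain ⟨m, rfl⟩ := hodd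
    omega
  refine (disjoint_image_iff (toFinset_injective hlab h2)).2 ?_
  exact disjoint_left.2 fun t ht ht' => hcd (ht.symm.trans ht')

theorem colourClass_union :
    colourClass lab 0 ∪ colourClass lab 1 ∪ colourClass lab 2 = range (toFinset lab) := by
  simp only [colourClass, ← image_union, ← image_univ]
  congr 1
  ext t
  simp only [mem_union, mem_ofPred_eq, mem_univ, iff_true]
  generalize t.colour = c
  fin_cases c <;> simp

theorem range_toFinset (lab : Bool × ZMod n → ℕ) :
    range (toFinset lab) =
      (range fun k => (cycle false k).toFinset lab) ∪
        (range fun k => (cycle true k).toFinset lab) ∪ range fun k => (rung k).toFinset lab := by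
  ext p
  constructor
  · rintro ⟨⟨_ | _, k⟩ | k, rfl⟩
    exacts [Or.inl (Or.inl ⟨k, rfl⟩), Or.inl (Or.inr ⟨k, rfl⟩), Or.inr ⟨k, rfl⟩]
  · rintro ((⟨k, rfl⟩ | ⟨k, rfl⟩) | ⟨k, rfl⟩) <;> exact ⟨_, rfl⟩

end PrismEdge

section Circulant

variable {n : ℕ}

theorem ZMod.natCast_ne_zero_of_pos_of_lt {i : ℕ} (hi0 : 0 < i) (hin : i < n) :
    (i : ZMod n) ≠ 0 := by
  rw [Ne, ZMod.natCast_eq_zero_iff]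
  exact Nat.not_dvd_of_pos_of_lt hi0 hin

theorem mod_eq_iff_natCast_eq_add {x y i : ℕ} (hx : x ≤ y + n) (hi : i < n) :
    (y + n - x) % n = i ↔ (y : ZMod n) = x + i := by
  rw [← Nat.mod_eq_of_lt hi, ← ZMod.natCast_eq_natCast_iff', Nat.mod_eq_of_lt hi,
    Nat.cast_sub hx, Nat.cast_add, ZMod.natCast_self]
  constructor <;> intro h <;> linear_combination h

theorem AA_eq_range {i : ℕ} (hi0 : 0 < i) (hin : i < n) :
    AA n i = range fun x : ZMod n => ({x.val, (x + i).val} : Finset ℕ) := by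
  have : NeZero n := ⟨by omega⟩
  ext p
  constructor
  · rintro ⟨x, y, hx, hy, -, h | h, rfl⟩
    · refine ⟨x, ?_⟩
      dsimp only
      rw [← (mod_eq_iff_natCast_eq_add (by omega) hin).1 h, ZMod.val_cast_of_lt hx,
        ZMod.val_cast_of_lt hy]
    · refine ⟨y, ?_⟩
      dsimp only
      rw [← (mod_eq_iff_natCast_eq_add (by omega) hin).1 h, ZMod.val_cast_of_lt hx,
        ZMod.val_cast_of_lt hy, Finset.pair_comm]
  · rintro ⟨x, rfl⟩
    refine ⟨x.val, (x + i).val, x.val_lt, (x + i).val_lt,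
      fun h => ZMod.natCast_ne_zero_of_pos_of_lt hi0 hin ?_,
      Or.inl ((mod_eq_iff_natCast_eq_add (by linarith [x.val_lt]) hin).2 (by simp)), rfl⟩
    linear_combination (ZMod.val_injective n h).symm

theorem BB_eq_range {i : ℕ} (hi0 : 0 < i) (hin : i < n) :
    BB n i = range fun y : ZMod n => ({n + y.val, n + (y + i).val} : Finset ℕ) := by
  have : NeZero n := ⟨by omega⟩
  ext p
  constructor
  · rintro ⟨x, y, hx, hx', hy, hy', -, h | h, rfl⟩
    · refine ⟨(x - n : ℕ), ?_⟩
      rw [show y + n - x = (y - n) + n - (x - n) by omega,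
        mod_eq_iff_natCast_eq_add (by omega) hin] at h
      dsimp only
      rw [← h, ZMod.val_cast_of_lt (by omega), ZMod.val_cast_of_lt (by omega)]
      congr 2 <;> omega
    · refine ⟨(y - n : ℕ), ?_⟩
      rw [show x + n - y = (x - n) + n - (y - n) by omega,
        mod_eq_iff_natCast_eq_add (by omega) hin] at h
      dsimp only
      rw [← h, ZMod.val_cast_of_lt (by omega), ZMod.val_cast_of_lt (by omega), Finset.pair_comm]
      congr 2 <;> omega
  · rintro ⟨y, rfl⟩
    refine ⟨n + y.val, n + (y + i).val, by omega, by linarith [y.val_lt], by omega,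
      by linarith [(y + i).val_lt], fun h => ZMod.natCast_ne_zero_of_pos_of_lt hi0 hin ?_,
      Or.inl ?_, rfl⟩
    · linear_combination (ZMod.val_injective n (by omega : y.val = (y + i).val)).symm
    · rw [show n + (y + i).val + n - (n + y.val) = (y + i).val + n - y.val by omega,
        mod_eq_iff_natCast_eq_add (by linarith [y.val_lt]) hin]
      simp

theorem CC_eq_range {m : ℕ} (hm : m < n) :
    CC n m = range fun x : ZMod n => ({x.val, n + (m - x).val} : Finset ℕ) := by
  have : NeZero n := ⟨by omega⟩
  ext p
  constructor
  · rintro ⟨x, y, hx, hy, hy', h, rfl⟩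
    refine ⟨x, ?_⟩
    rw [← Nat.mod_eq_of_lt hm, ← ZMod.natCast_eq_natCast_iff'] at h
    have hy'' : ((y - n : ℕ) : ZMod n) = m - x := by
      rw [Nat.cast_sub hy, ZMod.natCast_self, ← h]
      push_cast
      ring
    dsimp only
    rw [← hy'', ZMod.val_cast_of_lt hx, ZMod.val_cast_of_lt (by omega)]
    congr 2
    omega
  · rintro ⟨x, rfl⟩
    refine ⟨x.val, n + (m - x).val, x.val_lt, by omega, by linarith [(m - x : ZMod n).val_lt],
      ?_, rfl⟩
    rw [← Nat.mod_eq_of_lt hm, ← ZMod.natCast_eq_natCast_iff']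
    simp

/-- The rung at `k` joins `k * u` and `n + (j - k * u)`, whose sum is `j` mod `n`; with `u = i`
and `j = i - 1` this is the labelling of the header. -/
def circulantLabel (u : (ZMod n)ˣ) (j : ZMod n) : Bool × ZMod n → ℕ
  | (false, k) => (k * u).val
  | (true, k) => n + (j - k * u).val

variable (u : (ZMod n)ˣ) (j : ZMod n)

theorem circulantLabel_injective [NeZero n] : Injective (circulantLabel u j) := by
  rintro ⟨_ | _, k⟩ ⟨_ | _, k'⟩ h <;>
    simp only [circulantLabel, Nat.add_left_cancel_iff] at h
  · rw [(Units.mulRight_bijective u).injective (ZMod.val_injective n h)]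
  · linarith [(k * u).val_lt]
  · linarith [(k' * u).val_lt]
  · rw [(Units.mulRight_bijective u).injective (sub_right_injective (ZMod.val_injective n h))]

theorem range_circulantLabel [NeZero n] : range (circulantLabel u j) = Iio (2 * n) := by
  ext w
  simp only [mem_range, mem_Iio]
  constructor
  · rintro ⟨⟨_ | _, k⟩, rfl⟩ <;> simp only [circulantLabel]
    · linarith [(k * u).val_lt]
    · linarith [(j - k * u).val_lt]
  · intro hw
    rcases lt_or_ge w n with hwn | hwn
    · refine ⟨(false, w * ↑u⁻¹), ?_⟩
      simp [circulantLabel, ZMod.val_cast_of_lt hwn]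
    · refine ⟨(true, (j - (w - n : ℕ)) * ↑u⁻¹), ?_⟩
      simp [circulantLabel, ZMod.val_cast_of_lt (by omega : w - n < n)]
      omega

theorem range_toFinset_circulantLabel {i m : ℕ} (hi0 : 0 < i) (hin : i < n)
    (hu : (u : ZMod n) = i) (hm : m < n) :
    range (PrismEdge.toFinset (circulantLabel u m)) = AA n i ∪ BB n i ∪ CC n m := by
  have hmul := (Units.mulRight_bijective u).surjective
  have hsurj : Surjective fun k : ZMod n => (m : ZMod n) - (k + 1) * u := fun y =>
    ⟨(m - y) * ↑u⁻¹ - 1, by simp [sub_mul, mul_assoc]⟩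
  rw [PrismEdge.range_toFinset, AA_eq_range hi0 hin, BB_eq_range hi0 hin, CC_eq_range hm,
    ← hmul.range_comp fun x : ZMod n => ({x.val, (x + i).val} : Finset ℕ),
    ← hsurj.range_comp fun y : ZMod n => ({n + y.val, n + (y + i).val} : Finset ℕ),
    ← hmul.range_comp fun x : ZMod n => ({x.val, n + (m - x).val} : Finset ℕ)]
  congr <;> funext k <;> simp only [PrismEdge.toFinset, circulantLabel, comp_apply, ← hu,
    add_mul, one_mul]
  rw [sub_add_eq_sub_sub, sub_add_cancel, Finset.pair_comm]

end Circulant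

theorem ABC_three_factors_general (n i : ℕ) (hp : n.Prime) (hi1 : 1 ≤ i) (hi2 : i ≤ (n - 1) / 2) :
    ∃ F1 F2 F3 : Set (Finset ℕ),
      IsOneFactor n F1 ∧ IsOneFactor n F2 ∧ IsOneFactor n F3 ∧
      Disjoint F1 F2 ∧ Disjoint F1 F3 ∧ Disjoint F2 F3 ∧
      F1 ∪ F2 ∪ F3 = AA n i ∪ BB n i ∪ CC n (i - 1) := by
  have hn : 1 < n := hp.one_lt
  have hin : i < n := by omega
  have hodd : Odd n := hp.odd_of_ne_two (by omega)
  have : NeZero n := ⟨hp.ne_zero⟩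
  let u := ZMod.unitOfCoprime i (Nat.coprime_of_lt_prime (by omega) hin hp).symm
  let lab := circulantLabel u ((i - 1 : ℕ) : ZMod n)
  have hlab : Injective lab := circulantLabel_injective u _
  have hrange : range lab = Iio (2 * n) := range_circulantLabel u _
  have hfactor := PrismEdge.isOneFactor_colourClass hodd hn hlab hrange
  have hdisj {c d : Fin 3} (hcd : c ≠ d) := PrismEdge.disjoint_colourClass hodd hn hlab hcd
  refine ⟨_, _, _, hfactor 0, hfactor 1, hfactor 2, hdisj (by decide), hdisj (by decide),
    hdisj (by decide), ?_⟩
  rw [PrismEdge.colourClass_union, range_toFinset_circulantLabel u (by omega) hin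
    (ZMod.coe_unitOfCoprime _ _) (by omega)]

/-- For prime `n ≥ 7` with `n ≡ 1, 5 (mod 6)` and `1 ≤ i ≤ (n-1)/2`, the edge set
`A_i ∪ B_i ∪ C_{i-1}` can be partitioned into three perfect matchings of `K_{2n}`. -/
theorem ABC_three_factors (n i : ℕ) (hp : n.Prime) (h7 : 7 ≤ n)
    (hmod : n % 6 = 1 ∨ n % 6 = 5) (hi1 : 1 ≤ i) (hi2 : i ≤ (n - 1) / 2) :
    ∃ F1 F2 F3 : Set (Finset ℕ),
      IsOneFactor n F1 ∧ IsOneFactor n F2 ∧ IsOneFactor n F3 ∧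
      Disjoint F1 F2 ∧ Disjoint F1 F3 ∧ Disjoint F2 F3 ∧
      F1 ∪ F2 ∪ F3 = AA n i ∪ BB n i ∪ CC n (i - 1) :=
  ABC_three_factors_general n i hp hi1 hi2
end

section
/- Let n ≥ 7 with n ≡ 1 or 5 (mod 6) be prime. For each 1 ≤ i ≤ (n-1)/2, the edge set A_i ∪ B_i ∪ D_{i-1} can be partitioned into three perfect matchings of the complete graph on vertex set {0,...,2n-1}, where A_i = { {x,y} ⊂ {0,...,n-1} : y-x ≡ ±i (mod n) }, B_i = { {x,y} ⊂ {n,...,2n-1} : y-x ≡ ±i (mod n) }, and D_{i-1} = { {x,y} : 0 ≤ x ≤ n-1, n ≤ y ≤ 2n-1, y-x ≡ i-1 (mod n) }. -/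
/-- `C_i = { {x,y} : 0 ≤ x ≤ n-1, n ≤ y ≤ 2n-1, x + y ≡ i (mod n) }`. -/
def DD (n i : ℕ) : Set (Finset ℕ) :=
  { p | ∃ x y : ℕ, x < n ∧ n ≤ y ∧ y < 2 * n ∧ (y - x) % n = i ∧ p = {x, y} }

def cycleEdge (f : ℕ → ℕ) (k : ℕ) : Finset ℕ := {f k, f (k + 1)}

def rung (a b : ℕ → ℕ) (k : ℕ) : Finset ℕ := {a k, b k}

def prismFactor (a b : ℕ → ℕ) (S T : Set ℕ) : Set (Finset ℕ) :=
  cycleEdge a '' S ∪ cycleEdge b '' S ∪ rung a b '' T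

/-- For `j, k < n`: `j` is an end of the edge `{k, k + 1 mod n}` of the cycle `0, 1, …, n - 1`. -/
def IsCycleEdgeEnd (n k j : ℕ) : Prop := j = k ∨ j = k + 1 ∨ j = 0 ∧ k + 1 = n

/-- The edges `{k, k + 1 mod n}`, `k ∈ S`, form a matching of the `n`-cycle whose unmatched
vertices are exactly those in `T`. -/
structure IsCycleMatching (n : ℕ) (S T : Set ℕ) : Prop where
  edges_subset : S ⊆ Set.Iio n
  unmatched_subset : T ⊆ Set.Iio n
  eq_of_end :
    ∀ k ∈ S, ∀ m ∈ S, ∀ j, IsCycleEdgeEnd n k j → IsCycleEdgeEnd n m j → k = m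
  unmatched_not_end : ∀ k ∈ S, ∀ t ∈ T, ¬ IsCycleEdgeEnd n k t
  covers : ∀ j < n, j ∈ T ∨ ∃ k ∈ S, IsCycleEdgeEnd n k j

structure IsCycleLabelling (n : ℕ) (f : ℕ → ℕ) : Prop where
  injOn : Set.InjOn f (Set.Iio n)
  wrap : f n = f 0

structure IsPrismLabelling (n : ℕ) (a b : ℕ → ℕ) : Prop where
  left : IsCycleLabelling n a
  right : IsCycleLabelling n b
  left_ne_right : ∀ j k, a j ≠ b k
  left_lt : ∀ j, a j < 2 * n
  right_lt : ∀ j, b j < 2 * n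
  exists_eq : ∀ v < 2 * n, ∃ j < n, a j = v ∨ b j = v

section CycleMatching

variable {n : ℕ}

lemma isCycleMatching_odd (hodd : n % 2 = 1) :
    IsCycleMatching n {k | k < n ∧ k % 2 = 1} {0} where
  edges_subset _ hk := hk.1
  unmatched_subset := by simp; omega
  eq_of_end := by simp only [Set.mem_ofPred_eq, IsCycleEdgeEnd]; omega
  unmatched_not_end := by
    simp only [Set.mem_ofPred_eq, Set.mem_singleton_iff, IsCycleEdgeEnd]
    omega
  covers j hj := by
    rcases Nat.eq_zero_or_pos j with rfl | hj0
    · exact Or.inl rfl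
    · rcases Nat.mod_two_eq_zero_or_one j with hj2 | hj2
      · exact Or.inr ⟨j - 1, ⟨by omega, by omega⟩, by unfold IsCycleEdgeEnd; omega⟩
      · exact Or.inr ⟨j, ⟨hj, hj2⟩, Or.inl rfl⟩

lemma isCycleMatching_even (hn : 3 ≤ n) (hodd : n % 2 = 1) :
    IsCycleMatching n {k | 2 ≤ k ∧ k < n ∧ k % 2 = 0} {1} where
  edges_subset _ hk := hk.2.1
  unmatched_subset := by simp; omega
  eq_of_end := by simp only [Set.mem_ofPred_eq, IsCycleEdgeEnd]; omega
  unmatched_not_end := by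
    simp only [Set.mem_ofPred_eq, Set.mem_singleton_iff, IsCycleEdgeEnd]
    omega
  covers j hj := by
    rcases Nat.lt_or_ge j 2 with hj2 | hj2
    · rcases Nat.eq_zero_or_pos j with rfl | hj0
      · exact Or.inr ⟨n - 1, ⟨by omega, by omega, by omega⟩,
          by unfold IsCycleEdgeEnd; omega⟩
      · exact Or.inl (by simp; omega)
    · rcases Nat.mod_two_eq_zero_or_one j with hj2' | hj2'
      · exact Or.inr ⟨j, ⟨hj2, hj, hj2'⟩, Or.inl rfl⟩
      · exact Or.inr ⟨j - 1, ⟨by omega, by omega, by omega⟩,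
          by unfold IsCycleEdgeEnd; omega⟩

lemma isCycleMatching_zero (hn : 2 ≤ n) : IsCycleMatching n {0} (Set.Ico 2 n) where
  edges_subset := by simp; omega
  unmatched_subset _ ht := ht.2
  eq_of_end := by simp
  unmatched_not_end := by simp only [Set.mem_singleton_iff, Set.mem_Ico, IsCycleEdgeEnd]; omega
  covers j hj := by
    rcases Nat.lt_or_ge j 2 with hj2 | hj2
    · exact Or.inr ⟨0, rfl, by unfold IsCycleEdgeEnd; omega⟩
    · exact Or.inl ⟨hj2, hj⟩

end CycleMatching

namespace IsCycleLabelling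

variable {n j k : ℕ} {f : ℕ → ℕ}

lemma apply_mem_cycleEdge_iff (hf : IsCycleLabelling n f) (hj : j < n) (hk : k < n) :
    f j ∈ cycleEdge f k ↔ IsCycleEdgeEnd n k j := by
  simp only [cycleEdge, Finset.mem_insert, Finset.mem_singleton, IsCycleEdgeEnd]
  rcases Nat.lt_or_ge (k + 1) n with hk1 | hk1
  · rw [hf.injOn.eq_iff hj hk, hf.injOn.eq_iff hj hk1]
    omega
  · rw [show k + 1 = n by omega, hf.wrap, hf.injOn.eq_iff hj hk,
      hf.injOn.eq_iff hj (show 0 < n by omega)]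
    omega

lemma card_cycleEdge (hf : IsCycleLabelling n f) (hn : 2 ≤ n) (hk : k < n) :
    (cycleEdge f k).card = 2 := by
  refine Finset.card_pair fun h => ?_
  rcases Nat.lt_or_ge (k + 1) n with hk1 | hk1
  · exact absurd (hf.injOn hk hk1 h) (by omega)
  · rw [show k + 1 = n by omega, hf.wrap] at h
    exact absurd (hf.injOn hk (show 0 < n by omega) h) (by omega)

lemma cycleEdge_injOn (hf : IsCycleLabelling n f) (hn : 3 ≤ n) :
    Set.InjOn (cycleEdge f) (Set.Iio n) := by
  intro k hk m hm h
  have hkm := (hf.apply_mem_cycleEdge_iff hk hm).1 (h ▸ by simp [cycleEdge])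
  have hmk := (hf.apply_mem_cycleEdge_iff hm hk).1 (h ▸ by simp [cycleEdge])
  unfold IsCycleEdgeEnd at hkm hmk
  omega

end IsCycleLabelling

lemma prismFactor_comm {a b : ℕ → ℕ} {S T : Set ℕ} :
    prismFactor b a S T = prismFactor a b S T := by
  have : rung b a = rung a b := funext fun _ => Finset.pair_comm _ _
  rw [prismFactor, prismFactor, this, Set.union_comm (cycleEdge b '' S)]

lemma prismFactor_union {a b : ℕ → ℕ} {S T S' T' : Set ℕ} :
    prismFactor a b S T ∪ prismFactor a b S' T' = prismFactor a b (S ∪ S') (T ∪ T') := by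
  simp only [prismFactor, Set.image_union]
  ac_rfl

namespace IsPrismLabelling

variable {n j k : ℕ} {a b : ℕ → ℕ} {S T S' T' : Set ℕ} {p q : Finset ℕ}

lemma symm (h : IsPrismLabelling n a b) : IsPrismLabelling n b a where
  left := h.right
  right := h.left
  left_ne_right j k := (h.left_ne_right k j).symm
  left_lt := h.right_lt
  right_lt := h.left_lt
  exists_eq v hv := (h.exists_eq v hv).imp fun _ ⟨hj, hv⟩ => ⟨hj, hv.symm⟩

lemma left_notMem_cycleEdge_right (h : IsPrismLabelling n a b) : a j ∉ cycleEdge b k := by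
  simp [cycleEdge, h.left_ne_right]

lemma eq_cycleEdge_or_eq_rung_of_left_mem (h : IsPrismLabelling n a b)
    (hM : IsCycleMatching n S T) (hj : j < n) (hp : p ∈ prismFactor a b S T) (hjp : a j ∈ p) :
    (∃ k ∈ S, IsCycleEdgeEnd n k j ∧ p = cycleEdge a k) ∨ (j ∈ T ∧ p = rung a b j) := by
  rcases hp with (⟨k, hk, rfl⟩ | ⟨k, -, rfl⟩) | ⟨t, ht, rfl⟩
  · exact Or.inl ⟨k, hk, (h.left.apply_mem_cycleEdge_iff hj (hM.edges_subset hk)).1 hjp, rfl⟩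
  · exact absurd hjp h.left_notMem_cycleEdge_right
  · obtain rfl : j = t := by
      simp only [rung, Finset.mem_insert, Finset.mem_singleton, h.left_ne_right, or_false] at hjp
      exact h.left.injOn hj (hM.unmatched_subset ht) hjp
    exact Or.inr ⟨ht, rfl⟩

lemma eq_of_left_mem_of_left_mem (h : IsPrismLabelling n a b) (hM : IsCycleMatching n S T)
    (hj : j < n) (hp : p ∈ prismFactor a b S T) (hq : q ∈ prismFactor a b S T)
    (hjp : a j ∈ p) (hjq : a j ∈ q) : p = q := by
  rcases h.eq_cycleEdge_or_eq_rung_of_left_mem hM hj hp hjp with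
    ⟨k, hk, hkj, rfl⟩ | ⟨hjT, rfl⟩ <;>
  rcases h.eq_cycleEdge_or_eq_rung_of_left_mem hM hj hq hjq with
    ⟨m, hm, hmj, rfl⟩ | ⟨hjT', rfl⟩
  · rw [hM.eq_of_end k hk m hm j hkj hmj]
  · exact absurd hkj (hM.unmatched_not_end k hk j hjT')
  · exact absurd hmj (hM.unmatched_not_end m hm j hjT)
  · rfl

lemma lt_of_mem (h : IsPrismLabelling n a b) (hp : p ∈ prismFactor a b S T) {v : ℕ}
    (hv : v ∈ p) : v < 2 * n := by
  rcases hp with (⟨k, -, rfl⟩ | ⟨k, -, rfl⟩) | ⟨t, -, rfl⟩ <;>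
    simp only [cycleEdge, rung, Finset.mem_insert, Finset.mem_singleton] at hv <;>
    rcases hv with rfl | rfl <;> simp [h.left_lt, h.right_lt]

lemma eq_of_mem_of_mem (h : IsPrismLabelling n a b) (hM : IsCycleMatching n S T) {v : ℕ}
    (hp : p ∈ prismFactor a b S T) (hq : q ∈ prismFactor a b S T)
    (hvp : v ∈ p) (hvq : v ∈ q) : p = q := by
  obtain ⟨j, hj, rfl | rfl⟩ := h.exists_eq v (h.lt_of_mem hp hvp)
  · exact h.eq_of_left_mem_of_left_mem hM hj hp hq hvp hvq
  · rw [← prismFactor_comm] at hp hq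
    exact h.symm.eq_of_left_mem_of_left_mem hM hj hp hq hvp hvq

lemma isOneFactor_prismFactor (h : IsPrismLabelling n a b) (hn : 2 ≤ n)
    (hM : IsCycleMatching n S T) : IsOneFactor n (prismFactor a b S T) := by
  refine ⟨fun p hp => ⟨?_, fun v hv => h.lt_of_mem hp hv⟩,
    fun p hp q hq hpq => Finset.disjoint_left.2 fun v hvp hvq =>
      hpq (h.eq_of_mem_of_mem hM hp hq hvp hvq), fun v hv => ?_⟩
  · rcases hp with (⟨k, hk, rfl⟩ | ⟨k, hk, rfl⟩) | ⟨t, -, rfl⟩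
    · exact h.left.card_cycleEdge hn (hM.edges_subset hk)
    · exact h.right.card_cycleEdge hn (hM.edges_subset hk)
    · exact Finset.card_pair (h.left_ne_right t t)
  · obtain ⟨j, hj, rfl | rfl⟩ := h.exists_eq v hv <;>
      rcases hM.covers j hj with hjT | ⟨k, hk, hkj⟩
    · exact ⟨rung a b j, Or.inr ⟨j, hjT, rfl⟩, by simp [rung]⟩
    · exact ⟨cycleEdge a k, Or.inl (Or.inl ⟨k, hk, rfl⟩),
        (h.left.apply_mem_cycleEdge_iff hj (hM.edges_subset hk)).2 hkj⟩
    · exact ⟨rung a b j, Or.inr ⟨j, hjT, rfl⟩, by simp [rung]⟩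
    · exact ⟨cycleEdge b k, Or.inl (Or.inr ⟨k, hk, rfl⟩),
        (h.right.apply_mem_cycleEdge_iff hj (hM.edges_subset hk)).2 hkj⟩

lemma cycleEdge_left_ne_right (h : IsPrismLabelling n a b) : cycleEdge a k ≠ cycleEdge b j :=
  fun he => h.left_notMem_cycleEdge_right (he ▸ by simp [cycleEdge] : a k ∈ cycleEdge b j)

lemma cycleEdge_left_ne_rung (h : IsPrismLabelling n a b) : cycleEdge a k ≠ rung a b j :=
  fun he => h.symm.left_notMem_cycleEdge_right (he ▸ by simp [rung] : b j ∈ cycleEdge a k)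

lemma cycleEdge_right_ne_rung (h : IsPrismLabelling n a b) : cycleEdge b k ≠ rung a b j :=
  fun he => h.left_notMem_cycleEdge_right (he ▸ by simp [rung] : a j ∈ cycleEdge b k)

lemma rung_injOn (h : IsPrismLabelling n a b) : Set.InjOn (rung a b) (Set.Iio n) := by
  intro j hj k hk he
  have : a j ∈ rung a b k := he ▸ by simp [rung]
  simp only [rung, Finset.mem_insert, Finset.mem_singleton, h.left_ne_right, or_false] at this
  exact h.left.injOn hj hk this

lemma disjoint_prismFactor (h : IsPrismLabelling n a b) (hn : 3 ≤ n)
    (hM : IsCycleMatching n S T) (hM' : IsCycleMatching n S' T')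
    (hS : Disjoint S S') (hT : Disjoint T T') :
    Disjoint (prismFactor a b S T) (prismFactor a b S' T') := by
  refine Set.disjoint_left.2 ?_
  rintro p ((⟨k, hk, rfl⟩ | ⟨k, hk, rfl⟩) | ⟨t, ht, rfl⟩)
    ((⟨m, hm, he⟩ | ⟨m, hm, he⟩) | ⟨s, hs, he⟩)
  · obtain rfl := h.left.cycleEdge_injOn hn (hM'.edges_subset hm) (hM.edges_subset hk) he
    exact Set.disjoint_left.1 hS hk hm
  · exact h.cycleEdge_left_ne_right he.symm
  · exact h.cycleEdge_left_ne_rung he.symm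
  · exact h.cycleEdge_left_ne_right he
  · obtain rfl := h.right.cycleEdge_injOn hn (hM'.edges_subset hm) (hM.edges_subset hk) he
    exact Set.disjoint_left.1 hS hk hm
  · exact h.cycleEdge_right_ne_rung he.symm
  · exact h.cycleEdge_left_ne_rung he
  · exact h.cycleEdge_right_ne_rung he
  · obtain rfl := h.rung_injOn (hM'.unmatched_subset hs) (hM.unmatched_subset ht) he
    exact Set.disjoint_left.1 hT ht hs

theorem exists_three_isOneFactor (h : IsPrismLabelling n a b) (hn : 3 ≤ n)
    (hodd : n % 2 = 1) :
    ∃ F1 F2 F3 : Set (Finset ℕ),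
      IsOneFactor n F1 ∧ IsOneFactor n F2 ∧ IsOneFactor n F3 ∧
      Disjoint F1 F2 ∧ Disjoint F1 F3 ∧ Disjoint F2 F3 ∧
      F1 ∪ F2 ∪ F3 = prismFactor a b (Set.Iio n) (Set.Iio n) := by
  have h1 := isCycleMatching_odd hodd
  have h2 := isCycleMatching_even hn hodd
  have h3 := isCycleMatching_zero (n := n) (by omega)
  refine ⟨_, _, _, h.isOneFactor_prismFactor (by omega) h1,
    h.isOneFactor_prismFactor (by omega) h2, h.isOneFactor_prismFactor (by omega) h3,
    h.disjoint_prismFactor hn h1 h2 ?_ ?_, h.disjoint_prismFactor hn h1 h3 ?_ ?_,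
    h.disjoint_prismFactor hn h2 h3 ?_ ?_, ?_⟩
  all_goals first
    | exact Set.disjoint_left.2 fun k => by simp; omega
    | rw [prismFactor_union, prismFactor_union]; congr 1 <;> ext k <;> simp <;> omega

end IsPrismLabelling

lemma mod_eq_of_lt_two_mul {a n : ℕ} (h : a < 2 * n) :
    (a < n ∧ a % n = a) ∨ (n ≤ a ∧ a % n = a - n) := by
  rcases Nat.lt_or_ge a n with ha | ha
  · exact Or.inl ⟨ha, Nat.mod_eq_of_lt ha⟩
  · exact Or.inr ⟨ha, by rw [Nat.mod_eq_sub_mod ha, Nat.mod_eq_of_lt (by omega)]⟩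

lemma add_sub_mod_eq_iff {n x y i : ℕ} (hx : x < n) (hy : y < n) (hi : i < n) :
    (y + n - x) % n = i ↔ y = (x + i) % n := by
  have h := mod_eq_of_lt_two_mul (n := n) (a := y + n - x) (by omega)
  have h' := mod_eq_of_lt_two_mul (n := n) (a := x + i) (by omega)
  omega

/-- `blockLabel n i 0 0 k = a_k` and `blockLabel n i n (i - 1) k = b_k`. -/
def blockLabel (n i base c j : ℕ) : ℕ := base + (j * i + c) % n

section BlockLabel

variable {n i base c j : ℕ}

lemma le_blockLabel : base ≤ blockLabel n i base c j := Nat.le_add_right _ _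

lemma blockLabel_lt (hn : 0 < n) : blockLabel n i base c j < base + n :=
  Nat.add_lt_add_left (Nat.mod_lt _ hn) _

lemma blockLabel_succ :
    blockLabel n i base c (j + 1) = base + (blockLabel n i base c j - base + i) % n := by
  rw [blockLabel, blockLabel, Nat.add_sub_cancel_left, Nat.mod_add_mod, add_one_mul,
    add_right_comm]

lemma blockLabel_right_eq :
    blockLabel n i n c j = n + (blockLabel n i 0 0 j + c) % n := by
  simp [blockLabel]

lemma isCycleLabelling_blockLabel (hni : n.Coprime i) :
    IsCycleLabelling n (blockLabel n i base c) where
  injOn j hj m hm h :=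
    ((Nat.ModEq.add_right_cancel' c (Nat.add_left_cancel h)).cancel_right_of_coprime
      hni).eq_of_lt_of_lt hj hm
  wrap := by simp [blockLabel]

lemma exists_blockLabel_eq (hni : n.Coprime i) {x : ℕ} (hx : base ≤ x) (hx' : x < base + n) :
    ∃ j < n, blockLabel n i base c j = x := by
  have hsurj := Finset.surjOn_of_injOn_of_card_le (s := Finset.range n)
    (t := Finset.Ico base (base + n)) (blockLabel n i base c)
    (fun j hj => Finset.mem_Ico.2 ⟨le_blockLabel,
      blockLabel_lt (by simp at hj; omega)⟩)
    (by simpa using (isCycleLabelling_blockLabel hni).injOn) (by simp)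
  obtain ⟨j, hj, rfl⟩ := hsurj (Finset.mem_Ico.2 ⟨hx, hx'⟩)
  exact ⟨j, Finset.mem_range.1 hj, rfl⟩

lemma exists_blockLabel_succ_eq_iff (hni : n.Coprime i) (hin : i < n) {x y : ℕ}
    (hx : base ≤ x) (hx' : x < base + n) (hy : base ≤ y) (hy' : y < base + n) :
    (∃ j < n, blockLabel n i base c j = x ∧ blockLabel n i base c (j + 1) = y) ↔
      (y + n - x) % n = i := by
  obtain ⟨j, hj, rfl⟩ := exists_blockLabel_eq (c := c) hni hx hx'
  have hunique : (∃ m < n, blockLabel n i base c m = blockLabel n i base c j ∧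
      blockLabel n i base c (m + 1) = y) ↔ y = blockLabel n i base c (j + 1) := by
    refine ⟨fun ⟨m, hm, hmj, hmy⟩ => ?_, fun hy => ⟨j, hj, rfl, hy.symm⟩⟩
    rw [← (isCycleLabelling_blockLabel hni).injOn hm hj hmj, hmy]
  rw [hunique, blockLabel_succ, show y + n - blockLabel n i base c j =
    (y - base) + n - (blockLabel n i base c j - base) by omega,
    add_sub_mod_eq_iff (by omega) (by omega) hin]
  omega

lemma image_cycleEdge_blockLabel (hni : n.Coprime i) (hi : 0 < i) (hin : i < n) :
    cycleEdge (blockLabel n i base c) '' Set.Iio n =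
      {p | ∃ x y : ℕ, base ≤ x ∧ x < base + n ∧ base ≤ y ∧ y < base + n ∧
        x ≠ y ∧ ((y + n - x) % n = i ∨ (x + n - y) % n = i) ∧ p = {x, y}} := by
  have hiff := @exists_blockLabel_succ_eq_iff n i base c hni hin
  ext p
  constructor
  · rintro ⟨j, hj, rfl⟩
    have hsucc := (hiff le_blockLabel (blockLabel_lt (by omega)) le_blockLabel
      (blockLabel_lt (by omega))).1 ⟨j, hj, rfl, rfl⟩
    refine ⟨_, _, le_blockLabel, blockLabel_lt (by omega), le_blockLabel,
      blockLabel_lt (by omega), fun he => ?_, Or.inl hsucc, rfl⟩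
    rw [he, Nat.add_sub_cancel_left, Nat.mod_self] at hsucc
    omega
  · rintro ⟨x, y, hx, hx', hy, hy', -, hxy | hyx, rfl⟩
    · obtain ⟨j, hj, rfl, rfl⟩ := (hiff hx hx' hy hy').2 hxy
      exact ⟨j, hj, rfl⟩
    · obtain ⟨j, hj, rfl, rfl⟩ := (hiff hy hy' hx hx').2 hyx
      exact ⟨j, hj, Finset.pair_comm _ _⟩

lemma AA_eq_image_cycleEdge (hni : n.Coprime i) (hi : 0 < i) (hin : i < n) :
    AA n i = cycleEdge (blockLabel n i 0 0) '' Set.Iio n := by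
  rw [image_cycleEdge_blockLabel hni hi hin]
  simp [AA]

lemma BB_eq_image_cycleEdge (hni : n.Coprime i) (hi : 0 < i) (hin : i < n) :
    BB n i = cycleEdge (blockLabel n i n c) '' Set.Iio n := by
  rw [image_cycleEdge_blockLabel hni hi hin]
  simp [BB, two_mul]

lemma DD_eq_image_rung (hni : n.Coprime i) (hc : c < n) :
    DD n c = rung (blockLabel n i 0 0) (blockLabel n i n c) '' Set.Iio n := by
  have hn : 0 < n := by omega
  have hleft (j : ℕ) : blockLabel n i 0 0 j < n := by
    simpa using blockLabel_lt (base := 0) (c := 0) (i := i) (j := j) hn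
  have hright (j : ℕ) : blockLabel n i n c j < 2 * n := by
    have := blockLabel_lt (base := n) (c := c) (i := i) (j := j) hn
    omega
  have hrung (j y : ℕ) (hy : n ≤ y) (hy' : y < 2 * n) :
      (y - blockLabel n i 0 0 j) % n = c ↔ blockLabel n i n c j = y := by
    rw [blockLabel_right_eq, show y - blockLabel n i 0 0 j =
      (y - n) + n - blockLabel n i 0 0 j by omega, add_sub_mod_eq_iff (hleft j) (by omega) hc]
    omega
  ext p
  constructor
  · rintro ⟨x, y, hx, hy, hy', hd, rfl⟩
    obtain ⟨j, hj, rfl⟩ :=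
      exists_blockLabel_eq (base := 0) (c := 0) hni (Nat.zero_le x) (by omega)
    exact ⟨j, hj, by rw [rung, (hrung j y hy hy').1 hd]⟩
  · rintro ⟨j, hj, rfl⟩
    exact ⟨_, _, hleft j, le_blockLabel, hright j,
      (hrung j _ le_blockLabel (hright j)).2 rfl, rfl⟩

end BlockLabel

lemma isPrismLabelling_blockLabel {n i c : ℕ} (hni : n.Coprime i) (hn : 0 < n) :
    IsPrismLabelling n (blockLabel n i 0 0) (blockLabel n i n c) where
  left := isCycleLabelling_blockLabel hni
  right := isCycleLabelling_blockLabel hni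
  left_ne_right j k := by
    have := blockLabel_lt (base := 0) (c := 0) (i := i) (j := j) hn
    have := le_blockLabel (n := n) (base := n) (c := c) (i := i) (j := k)
    omega
  left_lt j := by
    have := blockLabel_lt (base := 0) (c := 0) (i := i) (j := j) hn
    omega
  right_lt j := by
    have := blockLabel_lt (base := n) (c := c) (i := i) (j := j) hn
    omega
  exists_eq v hv := by
    rcases Nat.lt_or_ge v n with hvn | hvn
    · obtain ⟨j, hj, hjv⟩ := exists_blockLabel_eq (base := 0) (c := 0) hni v.zero_le (by omega)
      exact ⟨j, hj, Or.inl hjv⟩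
    · obtain ⟨j, hj, hjv⟩ := exists_blockLabel_eq (base := n) (c := c) hni hvn (by omega)
      exact ⟨j, hj, Or.inr hjv⟩

theorem ABD_three_factors_general (n i : ℕ) (hp : n.Prime) (h7 : 7 ≤ n)
    (hi1 : 1 ≤ i) (hi2 : i ≤ (n - 1) / 2) :
    ∃ F1 F2 F3 : Set (Finset ℕ),
      IsOneFactor n F1 ∧ IsOneFactor n F2 ∧ IsOneFactor n F3 ∧
      Disjoint F1 F2 ∧ Disjoint F1 F3 ∧ Disjoint F2 F3 ∧
      F1 ∪ F2 ∪ F3 = AA n i ∪ BB n i ∪ DD n (i - 1) := by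
  have hin : i < n := by omega
  have hni : n.Coprime i := hp.coprime_iff_not_dvd.2 (Nat.not_dvd_of_pos_of_lt hi1 hin)
  have hodd : n % 2 = 1 := Nat.odd_iff.1 (hp.odd_of_ne_two (by omega))
  rw [AA_eq_image_cycleEdge hni hi1 hin, BB_eq_image_cycleEdge (c := i - 1) hni hi1 hin,
    DD_eq_image_rung hni (by omega)]
  exact (isPrismLabelling_blockLabel hni (by omega)).exists_three_isOneFactor (by omega) hodd

/-- For prime `n ≥ 7` with `n ≡ 1, 5 (mod 6)` and `1 ≤ i ≤ (n-1)/2`, the edge set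
`A_i ∪ B_i ∪ D_{i-1}` can be partitioned into three perfect matchings of `K_{2n}`. -/
theorem ABD_three_factors (n i : ℕ) (hp : n.Prime) (h7 : 7 ≤ n)
    (hmod : n % 6 = 1 ∨ n % 6 = 5) (hi1 : 1 ≤ i) (hi2 : i ≤ (n - 1) / 2) :
    ∃ F1 F2 F3 : Set (Finset ℕ),
      IsOneFactor n F1 ∧ IsOneFactor n F2 ∧ IsOneFactor n F3 ∧
      Disjoint F1 F2 ∧ Disjoint F1 F3 ∧ Disjoint F2 F3 ∧
      F1 ∪ F2 ∪ F3 = AA n i ∪ BB n i ∪ DD n (i - 1) :=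
  ABD_three_factors_general n i hp h7 hi1 hi2
end

section
/- Every k × v Latin rectangle (k ≤ v) can be completed to a v × v Latin square; that is, if R is a k × v array over a v-set Q in which each row is a permutation of Q and each column has k distinct entries, then there is a v × v Latin square whose first k rows equal R. -/
/-!
Rows are added one at a time. When `m < v` rows are placed, let `t j` be the set of symbols
not yet used in column `j`. Each column misses exactly `v - m` symbols, and each symbol, used
once per row and never twice in a column, is missing from exactly `v - m` columns. So the
bipartite graph joining column `j` to the symbols of `t j` is `(v - m)`-regular; double counting
gives Hall's condition, and a matching of all columns is a new row.
-/

open Finset Function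

theorem Finset.exists_injective_mem_of_le_card_of_card_filter_le {ι α : Type*} [Fintype ι]
    [DecidableEq α] (t : ι → Finset α) {d : ℕ} (hd : 0 < d) (hcard : ∀ i, d ≤ #(t i))
    (hdeg : ∀ a, #{i | a ∈ t i} ≤ d) : ∃ f : ι → α, Injective f ∧ ∀ i, f i ∈ t i := by
  refine (all_card_le_biUnion_card_iff_exists_injective t).1 fun s => ?_
  refine Nat.le_of_mul_le_mul_right (?_ : #s * d ≤ #(s.biUnion t) * d) hd
  refine card_mul_le_card_mul (fun i a => a ∈ t i) (fun i hi => ?_) (fun a _ => ?_)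
  · have hsub : t i ⊆ s.biUnion t := subset_biUnion_of_mem t hi
    rw [bipartiteAbove, filter_mem_eq_inter, inter_eq_right.2 hsub]
    exact hcard i
  · exact (card_le_card (filter_subset_filter _ (subset_univ s))).trans (hdeg a)

structure IsLatinRectangle {m : ℕ} {β α : Type*} (R : Fin m → β → α) : Prop where
  bijective_row : ∀ i, Bijective (R i)
  injective_col : ∀ j, Injective fun i => R i j

namespace IsLatinRectangle

variable {m : ℕ} {β α : Type*} {R : Fin m → β → α}

theorem exists_bijective_forall_ne [Fintype β] [Fintype α] (hR : IsLatinRectangle R)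
    (hβα : Fintype.card β = Fintype.card α) (hm : m < Fintype.card α) :
    ∃ f : β → α, Bijective f ∧ ∀ i j, f j ≠ R i j := by
  classical
  set t : β → Finset α := fun j => univ \ univ.image (R · j) with ht
  have hcard : ∀ j, #(t j) = Fintype.card α - m := fun j => by
    rw [ht, card_univ_sdiff, card_image_of_injective _ (hR.injective_col j), card_fin]
  have hdeg : ∀ a, #{j | a ∈ t j} ≤ Fintype.card α - m := fun a => by
    -- row `i` uses `a` in column `c i`, and distinct rows use it in distinct columns
    choose c hc using fun i => (hR.bijective_row i).surjective a
    have hused : m ≤ #{j | a ∉ t j} := by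
      rw [← card_fin m]
      refine card_le_card_of_injOn c (fun i _ => ?_) (fun i _ i' _ h => ?_)
      · simpa [ht] using ⟨i, hc i⟩
      · refine hR.injective_col (c i) (?_ : R i (c i) = R i' (c i))
        rw [hc i, h, hc i']
    have := card_filter_add_card_filter_not (s := univ) (fun j => a ∈ t j)
    rw [card_univ, hβα] at this
    omega
  obtain ⟨f, hf, hft⟩ := exists_injective_mem_of_le_card_of_card_filter_le t (by omega)
    (fun j => (hcard j).ge) hdeg
  refine ⟨f, (Fintype.bijective_iff_injective_and_card f).2 ⟨hf, hβα⟩, fun i j h => ?_⟩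
  simpa [ht, h] using hft j

theorem snoc (hR : IsLatinRectangle R) {f : β → α} (hf : Bijective f)
    (hfR : ∀ i j, f j ≠ R i j) : IsLatinRectangle (Fin.snoc R f : Fin (m + 1) → β → α) := by
  refine ⟨Fin.lastCases (by simpa using hf) (fun i => by simpa using hR.bijective_row i),
    fun j => ?_⟩
  have hcol : (fun i => (Fin.snoc R f : Fin (m + 1) → β → α) i j) = Fin.snoc (R · j) (f j) := by
    ext i
    induction i using Fin.lastCases <;> simp
  rw [hcol]
  exact Fin.snoc_injective_of_injective (hR.injective_col j) fun ⟨i, hi⟩ => hfR i j hi.symm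

theorem exists_extension [Fintype β] [Fintype α] (hR : IsLatinRectangle R)
    (hβα : Fintype.card β = Fintype.card α) {n : ℕ} (hmn : m ≤ n) (hn : n ≤ Fintype.card α) :
    ∃ L : Fin n → β → α, IsLatinRectangle L ∧ ∀ i, L (Fin.castLE hmn i) = R i := by
  induction n, hmn using Nat.le_induction with
  | base => exact ⟨R, hR, fun i => rfl⟩
  | succ n hmn ih =>
    obtain ⟨L, hL, hLR⟩ := ih (by omega)
    obtain ⟨f, hf, hfL⟩ := hL.exists_bijective_forall_ne hβα (by omega)
    exact ⟨Fin.snoc L f, hL.snoc hf hfL, fun i => by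
      rw [show Fin.castLE _ i = (Fin.castLE hmn i).castSucc from rfl, Fin.snoc_castSucc, hLR]⟩

end IsLatinRectangle

theorem latin_rectangle_completion_general (k v : ℕ) (hk : k ≤ v)
    (Q : Type) [Fintype Q] (hQ : Fintype.card Q = v)
    (R : Fin k → Fin v → Q)
    (hrow : ∀ i : Fin k, Function.Bijective (R i))
    (hcol : ∀ j : Fin v, Function.Injective fun i : Fin k => R i j) :
    ∃ L : Fin v → Fin v → Q,
      (∀ i : Fin v, Function.Bijective (L i)) ∧
      (∀ j : Fin v, Function.Bijective fun i : Fin v => L i j) ∧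
      (∀ (i : Fin k) (j : Fin v), L (Fin.castLE hk i) j = R i j) := by
  have hcard : Fintype.card (Fin v) = Fintype.card Q := by simp [hQ]
  obtain ⟨L, ⟨hLrow, hLcol⟩, hLR⟩ :=
    IsLatinRectangle.exists_extension ⟨hrow, hcol⟩ hcard hk hQ.ge
  exact ⟨L, hLrow, fun j => (Fintype.bijective_iff_injective_and_card _).2 ⟨hLcol j, hcard⟩,
    fun i => congrFun (hLR i)⟩

/-- Every `k × v` Latin rectangle (`k ≤ v`) over a `v`-set `Q` — each row a
permutation of `Q`, no repeats within a column — can be completed to a `v × v`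
Latin square whose first `k` rows are the given rectangle. -/
theorem latin_rectangle_completion (k v : ℕ) (hk : k ≤ v)
    (Q : Type) [Fintype Q] [DecidableEq Q] (hQ : Fintype.card Q = v)
    (R : Fin k → Fin v → Q)
    (hrow : ∀ i : Fin k, Function.Bijective (R i))
    (hcol : ∀ j : Fin v, Function.Injective fun i : Fin k => R i j) :
    ∃ L : Fin v → Fin v → Q,
      (∀ i : Fin v, Function.Bijective (L i)) ∧
      (∀ j : Fin v, Function.Bijective fun i : Fin v => L i j) ∧
      (∀ (i : Fin k) (j : Fin v), L (Fin.castLE hk i) j = R i j) :=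
  latin_rectangle_completion_general k v hk Q hQ R hrow hcol
end

section
/- Let (Q,B) be a Steiner quadruple system SQS(v) on Q = Z_v, let F = {F_0,...,F_{v-2}} and F' = {F'_0,...,F'_{v-2}} be one-factorizations of K_v on Z_v, and let α be a permutation of {0,...,v-2}. Define B' on Z_v × Z_2 by: (i) for each {x1,x2,x3,x4} ∈ B, include {(x1,0),(x2,0),(x3,0),(x4,0)} and {(x1,1),(x2,1),(x3,1),(x4,1)}; (ii) for each i, each {x1,x2} ∈ F_i and each {y1,y2} ∈ F'_{α(i)}, include {(x1,0),(x2,0),(y1,1),(y2,1)}. Then (Z_v × Z_2, B') is a Steiner quadruple system SQS(2v). -/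
/-- A Steiner quadruple system on the point set `α`. -/
def IsSQS {α : Type} (B : Set (Finset α)) : Prop :=
  (∀ b ∈ B, b.card = 4) ∧ ∀ t : Finset α, t.card = 3 → ∃! b, b ∈ B ∧ t ⊆ b

/-- A one-factorization of `K_v` on the vertex set `Z_v`: `v - 1` perfect matchings
partitioning all 2-subsets. -/
def IsOneFactorization (v : ℕ) (F : Fin (v - 1) → Set (Finset (ZMod v))) : Prop :=
  (∀ i, (∀ p ∈ F i, p.card = 2) ∧ ((F i).Pairwise fun p q => Disjoint p q) ∧
    ∀ x : ZMod v, ∃ p ∈ F i, x ∈ p) ∧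
  ∀ p : Finset (ZMod v), p.card = 2 → ∃! i, p ∈ F i

/-- The blocks of the DB (doubling) Construction on `Z_v × Z_2`. -/
def dbBlocks (v : ℕ) (B : Set (Finset (ZMod v)))
    (F F' : Fin (v - 1) → Set (Finset (ZMod v))) (α : Equiv.Perm (Fin (v - 1))) :
    Set (Finset (ZMod v × ZMod 2)) :=
  { q | (∃ b ∈ B, q = b.image fun x => (x, (0 : ZMod 2))) ∨
        (∃ b ∈ B, q = b.image fun x => (x, (1 : ZMod 2))) ∨
        (∃ i, ∃ p ∈ F i, ∃ p' ∈ F' (α i),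
          q = (p.image fun x => (x, (0 : ZMod 2))) ∪ (p'.image fun x => (x, (1 : ZMod 2)))) }

/-! Split a triple of `Z_v × Z_2` into its two levels: one level carries at least two of its
points. If it carries all three, the SQS(v) on that level supplies the unique block, and no
mixed block can hold three points of one level. If it carries two points `{x₁, x₂}` and the
other level one point `y`, a block through them must be mixed, `{x₁, x₂} × 0 ∪ p' × 1`; the pair
`{x₁, x₂}` lies in exactly one factor `F_i`, and `y` in exactly one edge `p'` of the perfect
matching `F'_{α i}`. The remaining cases follow by exchanging the levels, which turns
`(F, F', α)` into `(F', F, α⁻¹)`. -/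

open Finset

section TwoLevel

variable {X : Type} [DecidableEq X]

def twoLevel (s₀ s₁ : Finset X) : Finset (X × ZMod 2) :=
  s₀.image (·, 0) ∪ s₁.image (·, 1)

def level (c : ZMod 2) (t : Finset (X × ZMod 2)) : Finset X :=
  (t.filter (·.2 = c)).image Prod.fst

lemma mem_twoLevel {s₀ s₁ : Finset X} {z : X × ZMod 2} :
    z ∈ twoLevel s₀ s₁ ↔ z.1 ∈ s₀ ∧ z.2 = 0 ∨ z.1 ∈ s₁ ∧ z.2 = 1 := by
  obtain ⟨x, c⟩ := z
  simp [twoLevel, eq_comm]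

lemma card_twoLevel (s₀ s₁ : Finset X) : (twoLevel s₀ s₁).card = s₀.card + s₁.card := by
  have hinj (c : ZMod 2) : Function.Injective fun x : X => (x, c) :=
    fun _ _ h => congrArg Prod.fst h
  rw [twoLevel, card_union_of_disjoint, card_image_of_injective _ (hinj 0),
    card_image_of_injective _ (hinj 1)]
  simp [disjoint_left]

lemma twoLevel_subset_twoLevel_iff {a b c d : Finset X} :
    twoLevel a b ⊆ twoLevel c d ↔ a ⊆ c ∧ b ⊆ d := by
  constructor
  · intro h
    refine ⟨fun x hx => ?_, fun x hx => ?_⟩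
    · simpa using mem_twoLevel.1 (h ((mem_twoLevel (z := (x, 0))).2 (.inl ⟨hx, rfl⟩)))
    · simpa using mem_twoLevel.1 (h ((mem_twoLevel (z := (x, 1))).2 (.inr ⟨hx, rfl⟩)))
  · rintro ⟨hac, hbd⟩ z hz
    rw [mem_twoLevel] at hz ⊢
    exact hz.imp (And.imp_left (hac ·)) (And.imp_left (hbd ·))

lemma twoLevel_level (t : Finset (X × ZMod 2)) : twoLevel (level 0 t) (level 1 t) = t := by
  ext ⟨x, c⟩
  have h01 : (0 : ZMod 2) ≠ 1 := by decide
  obtain rfl | rfl : c = 0 ∨ c = 1 := by revert c; decide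
  all_goals simp [mem_twoLevel, level, h01, h01.symm]

lemma isSQS_image_twoLevel {P : Set (Finset X × Finset X)}
    (hcard : ∀ q ∈ P, q.1.card + q.2.card = 4)
    (huniq : ∀ a b : Finset X, a.card + b.card = 3 → ∃! q ∈ P, a ⊆ q.1 ∧ b ⊆ q.2) :
    IsSQS (Function.uncurry twoLevel '' P) := by
  refine ⟨?_, fun t ht => ?_⟩
  · rintro _ ⟨⟨c, d⟩, hq, rfl⟩
    simpa [card_twoLevel] using hcard _ hq
  rw [← twoLevel_level t, card_twoLevel] at ht
  rw [← twoLevel_level t]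
  obtain ⟨q, ⟨hq, hsub⟩, hqu⟩ := huniq _ _ ht
  refine ⟨_, ⟨⟨q, hq, rfl⟩, twoLevel_subset_twoLevel_iff.2 hsub⟩, ?_⟩
  rintro _ ⟨⟨q', hq', rfl⟩, hsub'⟩
  rw [hqu q' ⟨hq', twoLevel_subset_twoLevel_iff.1 hsub'⟩]

end TwoLevel

section Doubling

variable {X : Type}

/-- A pair `(c, d)` stands for the block `twoLevel c d = c × 0 ∪ d × 1`. -/
def doublingPairs (B : Set (Finset X)) (M : Set (Finset X × Finset X)) :
    Set (Finset X × Finset X) :=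
  {q | q.1 ∈ B ∧ q.2 = ∅ ∨ q.1 = ∅ ∧ q.2 ∈ B ∨ q ∈ M}

def IsMixedCompletion (M : Set (Finset X × Finset X)) : Prop :=
  (∀ q ∈ M, q.1.card = 2) ∧
    ∀ a b : Finset X, a.card = 2 → b.card = 1 → ∃! q ∈ M, a ⊆ q.1 ∧ b ⊆ q.2

lemma preimage_swap_doublingPairs (B : Set (Finset X)) (M : Set (Finset X × Finset X)) :
    Prod.swap ⁻¹' doublingPairs B M = doublingPairs B (Prod.swap ⁻¹' M) := by
  ext q
  simp only [doublingPairs, Set.mem_preimage, Set.mem_ofPred_eq, Prod.fst_swap, Prod.snd_swap]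
  tauto

variable {B : Set (Finset X)} {M : Set (Finset X × Finset X)}

lemma existsUnique_doublingPairs_of_two_le_card (hB : IsSQS B) (hM : IsMixedCompletion M)
    {a b : Finset X} (hab : a.card + b.card = 3) (ha : 2 ≤ a.card) :
    ∃! q ∈ doublingPairs B M, a ⊆ q.1 ∧ b ⊆ q.2 := by
  have ha₀ : a ≠ ∅ := nonempty_iff_ne_empty.1 (card_pos.1 (by omega))
  obtain ha₃ | ha₂ : a.card = 3 ∨ a.card = 2 := by omega
  · obtain rfl : b = ∅ := card_eq_zero.1 (by omega)
    obtain ⟨c, ⟨hc, hac⟩, hcu⟩ := hB.2 a ha₃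
    refine ⟨(c, ∅), ⟨.inl ⟨hc, rfl⟩, hac, subset_rfl⟩, ?_⟩
    rintro ⟨c', d'⟩ ⟨⟨hc', rfl⟩ | ⟨rfl, -⟩ | hq, hac', -⟩
    · rw [hcu c' ⟨hc', hac'⟩]
    · exact absurd (subset_empty.1 hac') ha₀
    · have := card_le_card hac'
      have := hM.1 _ hq
      omega
  · have hb₀ : b ≠ ∅ := nonempty_iff_ne_empty.1 (card_pos.1 (by omega))
    obtain ⟨q, ⟨hq, hsub⟩, hqu⟩ := hM.2 a b ha₂ (by omega)
    refine ⟨q, ⟨.inr (.inr hq), hsub⟩, ?_⟩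
    rintro ⟨c', d'⟩ ⟨⟨-, rfl⟩ | ⟨rfl, -⟩ | hq', hac', hbd'⟩
    · exact absurd (subset_empty.1 hbd') hb₀
    · exact absurd (subset_empty.1 hac') ha₀
    · exact hqu _ ⟨hq', hac', hbd'⟩

lemma existsUnique_doublingPairs (hB : IsSQS B) (hM : IsMixedCompletion M)
    (hM' : IsMixedCompletion (Prod.swap ⁻¹' M)) {a b : Finset X} (hab : a.card + b.card = 3) :
    ∃! q ∈ doublingPairs B M, a ⊆ q.1 ∧ b ⊆ q.2 := by
  by_cases ha : 2 ≤ a.card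
  · exact existsUnique_doublingPairs_of_two_le_card hB hM hab ha
  have hswap := existsUnique_doublingPairs_of_two_le_card hB hM' (a := b) (b := a)
    (by omega) (by omega)
  rw [← preimage_swap_doublingPairs] at hswap
  refine (Equiv.prodComm _ _).existsUnique_congr (fun q => ?_) |>.1 hswap
  simp only [Set.mem_preimage, Equiv.prodComm_apply, Prod.fst_swap, Prod.snd_swap]
  tauto

lemma isSQS_doubling [DecidableEq X] (hB : IsSQS B) (hM : IsMixedCompletion M)
    (hM' : IsMixedCompletion (Prod.swap ⁻¹' M)) :
    IsSQS (Function.uncurry twoLevel '' doublingPairs B M) := by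
  refine isSQS_image_twoLevel ?_ fun a b hab => existsUnique_doublingPairs hB hM hM' hab
  rintro ⟨c, d⟩ (⟨hc, rfl⟩ | ⟨rfl, hd⟩ | hq)
  · simpa using hB.1 c hc
  · simpa using hB.1 d hd
  · have h₁ : c.card = 2 := hM.1 _ hq
    have h₂ : d.card = 2 := hM'.1 (d, c) hq
    simp [h₁, h₂]

end Doubling

section MixedPairs

variable {X ι κ : Type}

def mixedPairs (F : ι → Set (Finset X)) (G : κ → Set (Finset X)) (f : ι → κ) :
    Set (Finset X × Finset X) :=
  {q | ∃ i, q.1 ∈ F i ∧ q.2 ∈ G (f i)}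

lemma preimage_swap_mixedPairs (F : ι → Set (Finset X)) (G : κ → Set (Finset X)) (e : ι ≃ κ) :
    Prod.swap ⁻¹' mixedPairs F G e = mixedPairs G F e.symm := by
  ext ⟨p, q⟩
  simp only [mixedPairs, Set.mem_preimage, Set.mem_ofPred_eq, Prod.fst_swap, Prod.snd_swap]
  exact ⟨fun ⟨i, hq, hp⟩ => ⟨e i, hp, by simpa using hq⟩,
    fun ⟨j, hp, hq⟩ => ⟨e.symm j, hq, by simpa using hp⟩⟩

lemma isMixedCompletion_mixedPairs {F : ι → Set (Finset X)} {G : κ → Set (Finset X)}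
    (f : ι → κ) (hFcard : ∀ i, ∀ p ∈ F i, p.card = 2)
    (hF : ∀ p : Finset X, p.card = 2 → ∃! i, p ∈ F i)
    (hGdisj : ∀ j, (G j).Pairwise Disjoint) (hGcover : ∀ j x, ∃ p ∈ G j, x ∈ p) :
    IsMixedCompletion (mixedPairs F G f) := by
  refine ⟨fun q ⟨i, hq, _⟩ => hFcard i _ hq, fun a b ha hb => ?_⟩
  obtain ⟨y, rfl⟩ := card_eq_one.1 hb
  obtain ⟨i, hi, hiu⟩ := hF a ha
  obtain ⟨p', hp', hy⟩ := hGcover (f i) y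
  refine ⟨(a, p'), ⟨⟨i, hi, hp'⟩, subset_rfl, singleton_subset_iff.2 hy⟩, ?_⟩
  rintro ⟨p, q'⟩ ⟨⟨j, hp, hq'⟩, hap, hyq⟩
  obtain rfl : p = a := (eq_of_subset_of_card_le hap (by rw [hFcard j p hp, ha])).symm
  obtain rfl := hiu j hp
  have hq'p' : q' = p' :=
    (hGdisj (f j)).eq hq' hp' (not_disjoint_iff.2 ⟨y, singleton_subset_iff.1 hyq, hy⟩)
  rw [hq'p']

end MixedPairs

lemma IsOneFactorization.isMixedCompletion {v : ℕ} {F F' : Fin (v - 1) → Set (Finset (ZMod v))}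
    (hF : IsOneFactorization v F) (hF' : IsOneFactorization v F') (f : Fin (v - 1) → Fin (v - 1)) :
    IsMixedCompletion (mixedPairs F F' f) :=
  isMixedCompletion_mixedPairs f (fun i => (hF.1 i).1) hF.2 (fun j => (hF'.1 j).2.1)
    (fun j => (hF'.1 j).2.2)

lemma dbBlocks_eq (v : ℕ) (B : Set (Finset (ZMod v)))
    (F F' : Fin (v - 1) → Set (Finset (ZMod v))) (α : Equiv.Perm (Fin (v - 1))) :
    dbBlocks v B F F' α = Function.uncurry twoLevel '' doublingPairs B (mixedPairs F F' α) := by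
  ext q
  simp only [dbBlocks, doublingPairs, mixedPairs, twoLevel, Set.mem_image, Set.mem_ofPred_eq,
    Prod.exists, Function.uncurry_apply_pair]
  constructor
  · rintro (⟨b, hb, rfl⟩ | ⟨b, hb, rfl⟩ | ⟨i, p, hp, p', hp', rfl⟩)
    · exact ⟨b, ∅, .inl ⟨hb, rfl⟩, by simp⟩
    · exact ⟨∅, b, .inr (.inl ⟨rfl, hb⟩), by simp⟩
    · exact ⟨p, p', .inr (.inr ⟨i, hp, hp'⟩), rfl⟩
  · rintro ⟨c, d, ⟨hc, rfl⟩ | ⟨rfl, hd⟩ | ⟨i, hc, hd⟩, rfl⟩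
    · exact .inl ⟨c, hc, by simp⟩
    · exact .inr (.inl ⟨d, hd, by simp⟩)
    · exact .inr (.inr ⟨i, c, hc, d, hd, rfl⟩)

theorem db_construction_sqs_general (v : ℕ)
    (B : Set (Finset (ZMod v))) (hB : IsSQS B)
    (F F' : Fin (v - 1) → Set (Finset (ZMod v)))
    (hF : IsOneFactorization v F) (hF' : IsOneFactorization v F')
    (α : Equiv.Perm (Fin (v - 1))) :
    IsSQS (dbBlocks v B F F' α) := by
  have hM : IsMixedCompletion (mixedPairs F F' α) := hF.isMixedCompletion hF' α
  have hM' : IsMixedCompletion (Prod.swap ⁻¹' mixedPairs F F' α) := by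
    rw [preimage_swap_mixedPairs F F' α]
    exact hF'.isMixedCompletion hF α.symm
  rw [dbBlocks_eq]
  exact isSQS_doubling hB hM hM'

/-- The DB Construction applied to an SQS(v), two one-factorizations of `K_v` and a
permutation `α` yields a Steiner quadruple system SQS(2v) on `Z_v × Z_2`. -/
theorem db_construction_sqs (v : ℕ) (hv : Even v)
    (B : Set (Finset (ZMod v))) (hB : IsSQS B)
    (F F' : Fin (v - 1) → Set (Finset (ZMod v)))
    (hF : IsOneFactorization v F) (hF' : IsOneFactorization v F')
    (α : Equiv.Perm (Fin (v - 1))) :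
    IsSQS (dbBlocks v B F F' α) :=
  db_construction_sqs_general v B hB F F' hF hF' α
end
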